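/- arXiv:2409.08690 — 8 statements merged into one kernel-verified Lean document; each statement's English description precedes it below -/
import Mathlib

section
/- (Theorem 1, combinatorial form) Let g be a contact graph with blocks A_1, …, A_m. Then the probability of the event E_g equals the sum over all injective functions ι from the set of blocks of g into Fin N of the products ∏_{j=1}^{m} ∏_{u ∈ A_j} p u (ι(A_j)); equivalently, μ(E_g) = ∑_{i_1, …, i_m pairwise distinct elements of Fin N} ∏_{j=1}^{m} ∏_{u ∈ A_j} p u (i_j). -/
/-!
The event `E_g` holds at `ω` exactly when `u ↦ X u ω` factors as `ι ∘ block` with `ι` injective on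
the blocks of `g`, and `ι` is then unique because `block` is surjective. Hence `E_g` is the
disjoint union, over injective `ι`, of the events `{∀ u, X u = ι (block u)}`, and independence
factors the probability of each of them into `∏ u, p u (ι (block u))`.
-/

open MeasureTheory ProbabilityTheory Finset

theorem Function.Surjective.exists_injective_comp_eq_iff {α β γ : Type*} {π : α → γ}
    (hπ : Function.Surjective π) (x : α → β) :
    (∃ ι : γ → β, Function.Injective ι ∧ ι ∘ π = x) ↔ ∀ u v, x u = x v ↔ π u = π v := by
  constructor
  · rintro ⟨ι, hι, rfl⟩ u v
    exact hι.eq_iff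
  · intro hx
    have hsec : ∀ u, π (Function.surjInv hπ (π u)) = π u := fun u => Function.surjInv_eq hπ _
    refine ⟨x ∘ Function.surjInv hπ, fun c d hcd => ?_, funext fun u => (hx _ u).2 (hsec u)⟩
    rw [← Function.surjInv_eq hπ c, ← Function.surjInv_eq hπ d]
    exact (hx _ _).1 hcd

theorem ProbabilityTheory.iIndepFun.measure_setOf_forall_eq {ι Ω β : Type*} [Fintype ι]
    [MeasurableSpace Ω] {μ : Measure Ω} [MeasurableSpace β] [MeasurableSingletonClass β]
    {X : ι → Ω → β} (hX : iIndepFun X μ) (c : ι → β) :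
    μ {ω | ∀ i, X i ω = c i} = ∏ i, μ {ω | X i ω = c i} := by
  rw [show {ω | ∀ i, X i ω = c i} = ⋂ i, X i ⁻¹' {c i} by ext; simp]
  exact hX.meas_iInter fun i => ⟨{c i}, measurableSet_singleton _, rfl⟩

namespace Finpartition

theorem prod_parts_prod {α M : Type*} [DecidableEq α] [CommMonoid M] {s : Finset α}
    (P : Finpartition s) (f : α → M) : ∏ B ∈ P.parts, ∏ u ∈ B, f u = ∏ u ∈ s, f u := by
  conv_rhs => rw [← P.biUnion_parts]
  exact (prod_biUnion P.supIndep.pairwiseDisjoint).symm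

variable {α : Type*} [Fintype α] [DecidableEq α] (P : Finpartition (univ : Finset α))

def block (u : α) : {B // B ∈ P.parts} := ⟨P.part u, P.part_mem.2 (mem_univ u)⟩

theorem block_eq_iff {u : α} {B : {B // B ∈ P.parts}} : P.block u = B ↔ u ∈ (B : Finset α) := by
  rw [← Subtype.val_inj]
  exact P.part_eq_iff_mem B.2

theorem block_surjective : Function.Surjective P.block := fun B =>
  let ⟨u, hu⟩ := P.nonempty_of_mem_parts B.2
  ⟨u, (P.block_eq_iff).2 hu⟩

theorem block_eq_block_iff {u v : α} :
    P.block u = P.block v ↔ ∃ B ∈ P.parts, u ∈ B ∧ v ∈ B := by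
  rw [← P.mem_part_iff_exists, P.mem_part_iff_part_eq_part (mem_univ u) (mem_univ v)]
  exact Subtype.ext_iff

theorem prod_comp_block {M : Type*} [CommMonoid M] (f : α → {B // B ∈ P.parts} → M) :
    ∏ u, f u (P.block u) = ∏ B : {B // B ∈ P.parts}, ∏ u ∈ (B : Finset α), f u B := by
  rw [← P.prod_parts_prod, ← prod_attach]
  exact prod_congr rfl fun B _ => prod_congr rfl fun u hu => by rw [(P.block_eq_iff).2 hu]

end Finpartition

section ContactEvent

variable {Ω α β : Type*} [Fintype α] [DecidableEq α] [Fintype β] [DecidableEq β]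
  {X : α → Ω → β} (P : Finpartition (univ : Finset α))

theorem setOf_forall_eq_iff_mem_parts_eq_biUnion :
    {ω | ∀ u v, X u ω = X v ω ↔ ∃ B ∈ P.parts, u ∈ B ∧ v ∈ B} =
      ⋃ ι ∈ univ.filter (fun ι : {B // B ∈ P.parts} → β => Function.Injective ι),
        {ω | ∀ u, X u ω = ι (P.block u)} := by
  ext ω
  simp only [← P.block_eq_block_iff, ← P.block_surjective.exists_injective_comp_eq_iff,
    funext_iff, Function.comp_apply, Set.mem_ofPred_eq, Set.mem_iUnion, mem_filter, mem_univ,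
    true_and, exists_prop, eq_comm]

theorem ProbabilityTheory.iIndepFun.measure_setOf_forall_eq_iff_mem_parts [MeasurableSpace Ω]
    [MeasurableSpace β] [MeasurableSingletonClass β] {μ : Measure Ω}
    (hX : ∀ u, Measurable (X u)) (hXindep : iIndepFun X μ) :
    μ {ω | ∀ u v, X u ω = X v ω ↔ ∃ B ∈ P.parts, u ∈ B ∧ v ∈ B} =
      ∑ ι ∈ univ.filter (fun ι : {B // B ∈ P.parts} → β => Function.Injective ι),
        ∏ B : {B // B ∈ P.parts}, ∏ u ∈ (B : Finset α), μ {ω | X u ω = ι B} := by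
  rw [setOf_forall_eq_iff_mem_parts_eq_biUnion, measure_biUnion_finset]
  · exact sum_congr rfl fun ι _ => by
      rw [hXindep.measure_setOf_forall_eq, P.prod_comp_block fun u B => μ {ω | X u ω = ι B}]
  · intro ι _ κ _ hne
    exact Set.disjoint_left.2 fun ω hι hκ => hne <|
      P.block_surjective.injective_comp_right <| funext fun u => (hι u).symm.trans (hκ u)
  · intro ι _
    simp only [Set.ofPred_forall]
    exact MeasurableSet.iInter fun u => hX u (measurableSet_singleton _)

end ContactEvent

theorem contact_graph_prob_combinatorial_general
    (N M : ℕ)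
    {Ω : Type*} [MeasurableSpace Ω] (μ : Measure Ω)
    (X : Fin M → Ω → Fin N)
    (hXmeas : ∀ j, Measurable (X j))
    (hXindep : iIndepFun X μ)
    (p : Fin M → Fin N → NNReal)
    (hp : ∀ j i, μ {ω | X j ω = i} = p j i)
    (g : Finpartition (Finset.univ : Finset (Fin M))) :
    μ {ω | ∀ u v : Fin M, X u ω = X v ω ↔ ∃ B ∈ g.parts, u ∈ B ∧ v ∈ B}
      = ((∑ ι ∈ Finset.univ.filter
            (fun ι : {B // B ∈ g.parts} → Fin N => Function.Injective ι),
          ∏ B : {B // B ∈ g.parts}, ∏ u ∈ (B : Finset (Fin M)), p u (ι B) : NNReal)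
        : ENNReal) := by
  rw [hXindep.measure_setOf_forall_eq_iff_mem_parts g hXmeas]
  push_cast
  simp only [hp]

/-- Theorem 1, combinatorial form: the probability of the contact-graph event
`E_g` equals the sum, over all injective assignments of pairwise distinct states to the blocks
of `g`, of the products of the marginal probabilities. -/
theorem contact_graph_prob_combinatorial
    (N M : ℕ) (hN : 1 ≤ N) (hM : 1 ≤ M)
    {Ω : Type*} [MeasurableSpace Ω] (μ : Measure Ω) [IsProbabilityMeasure μ]
    (X : Fin M → Ω → Fin N)
    (hXmeas : ∀ j, Measurable (X j))
    (hXindep : iIndepFun X μ)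
    (p : Fin M → Fin N → NNReal)
    (hp : ∀ j i, μ {ω | X j ω = i} = p j i)
    (hpsum : ∀ j, ∑ i, p j i = 1)
    (g : Finpartition (Finset.univ : Finset (Fin M))) :
    μ {ω | ∀ u v : Fin M, X u ω = X v ω ↔ ∃ B ∈ g.parts, u ∈ B ∧ v ∈ B}
      = ((∑ ι ∈ Finset.univ.filter
            (fun ι : {B // B ∈ g.parts} → Fin N => Function.Injective ι),
          ∏ B : {B // B ∈ g.parts}, ∏ u ∈ (B : Finset (Fin M)), p u (ι B) : NNReal)
        : ENNReal) :=
  contact_graph_prob_combinatorial_general N M μ X hXmeas hXindep p hp g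
end

section
/- (2-clique formula) Let g be a contact graph with exactly two blocks A_1 and A_2 (so A_1 ∪ A_2 = Fin M and A_1 ∩ A_2 = ∅). Then μ(E_g) = σ(A_1)·σ(A_2) − σ(Fin M). -/
open MeasureTheory ProbabilityTheory

/-!
With two blocks, `E_g` is the event that `X` is constant on `A₁` and on `A₂` but not on all of
`Fin M`. Writing `C(A)` for the event that `X` is constant on `A`, we have
`C(Fin M) ⊆ C(A₁) ∩ C(A₂)`, hence `μ(E_g) = μ(C(A₁) ∩ C(A₂)) - μ(C(Fin M))`. As the blocks are
disjoint, independence gives `μ(C(A₁) ∩ C(A₂)) = μ(C(A₁)) μ(C(A₂))`, and `μ(C(A)) = σ(A)` by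
splitting `C(A)` according to the common value.
-/

section

variable {Ω ι α : Type*}

def cliqueEvent (X : ι → Ω → α) (A : Finset ι) : Set Ω :=
  {ω | ∃ a, ∀ u ∈ A, X u ω = a}

def contactEvent [Fintype ι] [DecidableEq ι] (X : ι → Ω → α)
    (g : Finpartition (Finset.univ : Finset ι)) : Set Ω :=
  {ω | ∀ u v, X u ω = X v ω ↔ ∃ B ∈ g.parts, u ∈ B ∧ v ∈ B}

lemma cliqueEvent_anti (X : ι → Ω → α) {A B : Finset ι} (h : A ⊆ B) :
    cliqueEvent X B ⊆ cliqueEvent X A :=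
  fun _ ⟨a, ha⟩ => ⟨a, fun u hu => ha u (h hu)⟩

lemma setOf_forall_eq_eq_biInter (X : ι → Ω → α) (A : Finset ι) (a : ι → α) :
    {ω | ∀ u ∈ A, X u ω = a u} = ⋂ u ∈ A, X u ⁻¹' {a u} := by
  ext
  simp

lemma contactEvent_eq_of_parts_eq_pair [Fintype ι] [DecidableEq ι] (X : ι → Ω → α)
    {g : Finpartition (Finset.univ : Finset ι)} {A₁ A₂ : Finset ι} (hA : A₁ ≠ A₂)
    (hparts : g.parts = {A₁, A₂}) :
    contactEvent X g = (cliqueEvent X A₁ ∩ cliqueEvent X A₂) \ cliqueEvent X Finset.univ := by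
  have hA₁ : A₁ ∈ g.parts := by simp [hparts]
  have hA₂ : A₂ ∈ g.parts := by simp [hparts]
  have hdisj : Disjoint A₁ A₂ := g.disjoint hA₁ hA₂ hA
  obtain ⟨u₁, hu₁⟩ := g.nonempty_of_mem_parts hA₁
  obtain ⟨u₂, hu₂⟩ := g.nonempty_of_mem_parts hA₂
  have hcover : ∀ u, u ∈ A₁ ∨ u ∈ A₂ := fun u => by
    simpa [hparts] using g.exists_mem (Finset.mem_univ u)
  have hblock : ∀ u v, (∃ B ∈ g.parts, u ∈ B ∧ v ∈ B) ↔ u ∈ A₁ ∧ v ∈ A₁ ∨ u ∈ A₂ ∧ v ∈ A₂ := by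
    simp [hparts]
  ext ω
  simp only [contactEvent, cliqueEvent, hblock, Set.mem_ofPred_eq, Set.mem_sdiff,
    Set.mem_inter_iff, Finset.mem_univ, forall_const]
  constructor
  · intro h
    refine ⟨⟨⟨X u₁ ω, fun u hu => (h u u₁).2 (.inl ⟨hu, hu₁⟩)⟩,
      ⟨X u₂ ω, fun u hu => (h u u₂).2 (.inr ⟨hu, hu₂⟩)⟩⟩, ?_⟩
    rintro ⟨c, hc⟩
    rcases (h u₁ u₂).1 ((hc u₁).trans (hc u₂).symm) with ⟨-, h₂⟩ | ⟨h₁, -⟩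
    · exact Finset.disjoint_left.1 hdisj h₂ hu₂
    · exact Finset.disjoint_left.1 hdisj hu₁ h₁
  · rintro ⟨⟨⟨a, ha⟩, ⟨b, hb⟩⟩, hnot⟩ u v
    have hab : a ≠ b := by
      rintro rfl
      exact hnot ⟨a, fun u => (hcover u).elim (ha u) (hb u)⟩
    constructor
    · intro huv
      rcases hcover u with hu | hu <;> rcases hcover v with hv | hv
      · exact .inl ⟨hu, hv⟩
      · exact absurd (((ha u hu).symm.trans huv).trans (hb v hv)) hab
      · exact absurd (((ha v hv).symm.trans huv.symm).trans (hb u hu)) hab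
      · exact .inr ⟨hu, hv⟩
    · rintro (⟨hu, hv⟩ | ⟨hu, hv⟩)
      · rw [ha u hu, ha v hv]
      · rw [hb u hu, hb v hv]

variable [MeasurableSpace Ω] {μ : Measure Ω} [MeasurableSpace α] [MeasurableSingletonClass α]
  {X : ι → Ω → α}

lemma measurableSet_forall_eq (hX : ∀ u, Measurable (X u)) (A : Finset ι) (a : ι → α) :
    MeasurableSet {ω | ∀ u ∈ A, X u ω = a u} := by
  rw [setOf_forall_eq_eq_biInter]
  exact Finset.measurableSet_biInter A fun u _ => hX u (measurableSet_singleton _)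

lemma measurableSet_cliqueEvent [Countable α] (hX : ∀ u, Measurable (X u)) (A : Finset ι) :
    MeasurableSet (cliqueEvent X A) := by
  have : cliqueEvent X A = ⋃ a, {ω | ∀ u ∈ A, X u ω = a} := by ext; simp [cliqueEvent]
  rw [this]
  exact .iUnion fun a => measurableSet_forall_eq hX A fun _ => a

namespace ProbabilityTheory

lemma iIndepFun.measureReal_forall_eq (hX : iIndepFun X μ) (A : Finset ι) (a : ι → α) :
    μ.real {ω | ∀ u ∈ A, X u ω = a u} = ∏ u ∈ A, μ.real {ω | X u ω = a u} := by
  have h := hX.measure_inter_preimage_eq_mul A (sets := fun u => {a u})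
    fun _ _ => measurableSet_singleton _
  simp only [measureReal_def, ← ENNReal.toReal_prod, setOf_forall_eq_eq_biInter, h]
  rfl

lemma iIndepFun.measureReal_cliqueEvent [Fintype α] (hX : iIndepFun X μ)
    (hXm : ∀ u, Measurable (X u)) {A : Finset ι} (hA : A.Nonempty) :
    μ.real (cliqueEvent X A) = ∑ a, ∏ u ∈ A, μ.real {ω | X u ω = a} := by
  have := hX.isProbabilityMeasure
  obtain ⟨u₀, hu₀⟩ := hA
  have hunion : cliqueEvent X A = ⋃ a, {ω | ∀ u ∈ A, X u ω = a} := by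
    ext; simp [cliqueEvent]
  rw [hunion, measureReal_iUnion_fintype]
  · exact Finset.sum_congr rfl fun a _ => hX.measureReal_forall_eq A fun _ => a
  · intro a b hab
    exact Set.disjoint_left.2 fun ω ha hb => hab ((ha u₀ hu₀).symm.trans (hb u₀ hu₀))
  · exact fun a => measurableSet_forall_eq hXm A fun _ => a

lemma iIndepFun.measureReal_cliqueEvent_inter [Finite α] (hX : iIndepFun X μ)
    (hXm : ∀ u, Measurable (X u)) {A B : Finset ι} (h : Disjoint A B) :
    μ.real (cliqueEvent X A ∩ cliqueEvent X B) =
      μ.real (cliqueEvent X A) * μ.real (cliqueEvent X B) := by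
  have hpre : ∀ C : Finset ι,
      cliqueEvent X C = (fun ω (u : C) => X u ω) ⁻¹' {x | ∃ a, ∀ u, x u = a} := by
    intro C
    ext
    simp [cliqueEvent]
  rw [hpre A, hpre B]
  simp only [measureReal_def]
  rw [(hX.indepFun_finset A B h hXm).measure_inter_preimage_eq_mul _ _ .of_discrete .of_discrete,
    ENNReal.toReal_mul]

end ProbabilityTheory

end

theorem contact_graph_prob_two_cliques_general
    (N M : ℕ)
    {Ω : Type*} [MeasurableSpace Ω] (μ : Measure Ω)
    (X : Fin M → Ω → Fin N)
    (hXmeas : ∀ j, Measurable (X j))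
    (hXindep : iIndepFun X μ)
    (p : Fin M → Fin N → NNReal)
    (hp : ∀ j i, μ {ω | X j ω = i} = p j i)
    (g : Finpartition (Finset.univ : Finset (Fin M)))
    (A₁ A₂ : Finset (Fin M)) (hA : A₁ ≠ A₂)
    (hparts : g.parts = {A₁, A₂}) :
    (μ {ω | ∀ u v : Fin M, X u ω = X v ω ↔ ∃ B ∈ g.parts, u ∈ B ∧ v ∈ B}).toReal
      = (∑ i : Fin N, ∏ u ∈ A₁, (p u i : ℝ)) * (∑ i : Fin N, ∏ u ∈ A₂, (p u i : ℝ))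
        - ∑ i : Fin N, ∏ u : Fin M, (p u i : ℝ) := by
  have := hXindep.isProbabilityMeasure
  have hA₁ : A₁ ∈ g.parts := by simp [hparts]
  have hA₂ : A₂ ∈ g.parts := by simp [hparts]
  have hdisj : Disjoint A₁ A₂ := g.disjoint hA₁ hA₂ hA
  have hp' : ∀ j i, μ.real {ω | X j ω = i} = p j i := fun j i => by simp [measureReal_def, hp]
  have hsub : cliqueEvent X Finset.univ ⊆ cliqueEvent X A₁ ∩ cliqueEvent X A₂ :=
    Set.subset_inter (cliqueEvent_anti X (Finset.subset_univ _))
      (cliqueEvent_anti X (Finset.subset_univ _))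
  change μ.real (contactEvent X g) = _
  rw [contactEvent_eq_of_parts_eq_pair X hA hparts,
    measureReal_sdiff hsub (measurableSet_cliqueEvent hXmeas _),
    hXindep.measureReal_cliqueEvent_inter hXmeas hdisj,
    hXindep.measureReal_cliqueEvent hXmeas (g.nonempty_of_mem_parts hA₁),
    hXindep.measureReal_cliqueEvent hXmeas (g.nonempty_of_mem_parts hA₂),
    hXindep.measureReal_cliqueEvent hXmeas
      ((g.nonempty_of_mem_parts hA₁).mono (Finset.subset_univ _))]
  simp only [hp']

/-- 2-clique formula: if the contact graph `g` has exactly two blocks `A₁, A₂`,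
then `μ(E_g) = σ(A₁)·σ(A₂) − σ(Fin M)`. -/
theorem contact_graph_prob_two_cliques
    (N M : ℕ) (hN : 1 ≤ N) (hM : 1 ≤ M)
    {Ω : Type*} [MeasurableSpace Ω] (μ : Measure Ω) [IsProbabilityMeasure μ]
    (X : Fin M → Ω → Fin N)
    (hXmeas : ∀ j, Measurable (X j))
    (hXindep : iIndepFun X μ)
    (p : Fin M → Fin N → NNReal)
    (hp : ∀ j i, μ {ω | X j ω = i} = p j i)
    (hpsum : ∀ j, ∑ i, p j i = 1)
    (g : Finpartition (Finset.univ : Finset (Fin M)))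
    (A₁ A₂ : Finset (Fin M)) (hA : A₁ ≠ A₂)
    (hparts : g.parts = {A₁, A₂}) :
    (μ {ω | ∀ u v : Fin M, X u ω = X v ω ↔ ∃ B ∈ g.parts, u ∈ B ∧ v ∈ B}).toReal
      = (∑ i : Fin N, ∏ u ∈ A₁, (p u i : ℝ)) * (∑ i : Fin N, ∏ u ∈ A₂, (p u i : ℝ))
        - ∑ i : Fin N, ∏ u : Fin M, (p u i : ℝ) :=
  contact_graph_prob_two_cliques_general N M μ X hXmeas hXindep p hp g A₁ A₂ hA hparts
end

section
/- (3-clique formula) Let g be a contact graph with exactly three blocks A_1, A_2, A_3. Writing A_{ij} = A_i ∪ A_j and 𝓜 = Fin M, μ(E_g) = σ(A_1)σ(A_2)σ(A_3) − σ(A_{12})σ(A_3) − σ(A_{13})σ(A_2) − σ(A_{23})σ(A_1) + 2·σ(𝓜). -/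
open MeasureTheory ProbabilityTheory

/-- `σ(A) = ∑ i, ∏ u ∈ A, p u i`, as a real number. -/
def sigmaProb (N M : ℕ) (p : Fin M → Fin N → NNReal) (A : Finset (Fin M)) : ℝ :=
  ∑ i : Fin N, ∏ u ∈ A, (p u i : ℝ)

/-!
On `E_g` the configuration `u ↦ X u ω` is constant exactly on the blocks, i.e. it equals `t ∘ b`
for the block index `b : Fin M → Fin 3` and an injective colouring `t` of the three blocks. By
independence such a configuration has probability `∏ₖ ∏_{u ∈ A_k} p u (t k)`, so `μ(E_g)` is a sum
over triples of pairwise distinct colours. Inclusion–exclusion on the indicator of pairwise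
distinctness, `1 - [i = j] - [i = k] - [j = k] + 2 [i = j = k]`, splits that sum into products of
`σ`'s.
-/

open Finset Function

theorem injective_triple_iff_ne {α : Type*} {x y z : α} :
    Injective ![x, y, z] ↔ x ≠ y ∧ x ≠ z ∧ y ≠ z := by
  simp only [Matrix.vecCons, Fin.cons_injective_iff, Set.mem_range, Fin.exists_fin_succ]
  simp [Injective, eq_iff_true_of_subsingleton]
  tauto

section DistinctTriples

variable {α R : Type*} [Fintype α] [DecidableEq α] [CommRing R]

theorem sum_pairwise_ne_mul_mul (a b c : α → R) :
    ∑ i, ∑ j, ∑ k, (if i ≠ j ∧ i ≠ k ∧ j ≠ k then a i * b j * c k else 0)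
      = (∑ i, a i) * (∑ i, b i) * (∑ i, c i) - (∑ i, a i * b i) * (∑ i, c i)
        - (∑ i, a i * c i) * (∑ i, b i) - (∑ i, b i * c i) * (∑ i, a i)
        + 2 * ∑ i, a i * b i * c i := by
  have indicator_eq : ∀ i j k, (if i ≠ j ∧ i ≠ k ∧ j ≠ k then a i * b j * c k else 0)
      = a i * b j * c k - (if j = i then a i * b j * c k else 0)
        - (if k = i then a i * b j * c k else 0) - (if k = j then a i * b j * c k else 0)
        + 2 * (if j = i ∧ k = i then a i * b j * c k else 0) := by
    intro i j k
    split_ifs <;> grind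
  have eq₁₂ : ∑ i, ∑ j, ∑ k, (if j = i then a i * b j * c k else 0)
      = (∑ i, a i * b i) * ∑ i, c i := by
    simp [← mul_sum, ← sum_mul]
  have eq₁₃ : ∑ i, ∑ j, ∑ k, (if k = i then a i * b j * c k else 0)
      = (∑ i, a i * c i) * ∑ i, b i := by
    simp [← mul_sum, ← sum_mul, mul_right_comm]
  have eq₂₃ : ∑ i, ∑ j, ∑ k, (if k = j then a i * b j * c k else 0)
      = (∑ i, b i * c i) * ∑ i, a i := by
    simp [mul_assoc, ← mul_sum]
    rw [← sum_mul, mul_comm]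
  have eq₁₂₃ : ∑ i, ∑ j, ∑ k, (if j = i ∧ k = i then a i * b j * c k else 0)
      = ∑ i, a i * b i * c i := by
    simp [ite_and]
  simp only [indicator_eq, sum_add_distrib, sum_sub_distrib, ← mul_sum]
  rw [eq₁₂, eq₁₃, eq₂₃, eq₁₂₃]
  simp only [← mul_sum, ← sum_mul]

theorem sum_injective_fin_three (G : (Fin 3 → α) → R) :
    ∑ t : Fin 3 → α with Injective t, G t
      = ∑ i, ∑ j, ∑ k, if i ≠ j ∧ i ≠ k ∧ j ≠ k then G ![i, j, k] else 0 := by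
  let e : α × α × α ≃ (Fin 3 → α) :=
    { toFun x := ![x.1, x.2.1, x.2.2]
      invFun t := (t 0, t 1, t 2)
      left_inv _ := rfl
      right_inv t := by ext k; fin_cases k <;> rfl }
  rw [sum_filter, ← e.sum_comp]
  simp only [Fintype.sum_prod_type]
  exact sum_congr rfl fun i _ => sum_congr rfl fun j _ => sum_congr rfl fun k _ =>
    if_congr injective_triple_iff_ne rfl rfl

theorem sum_injective_fin_three_prod (F : Fin 3 → α → R) :
    ∑ t : Fin 3 → α with Injective t, ∏ k, F k (t k)
      = (∑ i, F 0 i) * (∑ i, F 1 i) * (∑ i, F 2 i) - (∑ i, F 0 i * F 1 i) * (∑ i, F 2 i)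
        - (∑ i, F 0 i * F 2 i) * (∑ i, F 1 i) - (∑ i, F 1 i * F 2 i) * (∑ i, F 0 i)
        + 2 * ∑ i, ∏ k, F k i := by
  simp only [sum_injective_fin_three, Fin.prod_univ_three]
  exact sum_pairwise_ne_mul_mul _ _ _

end DistinctTriples

theorem sum_same_ker_eq_sum_injective_comp {ι κ α M : Type*} [Fintype ι] [DecidableEq ι]
    [Fintype κ] [Fintype α] [DecidableEq κ] [DecidableEq α] [AddCommMonoid M] {b : ι → κ}
    (hb : Surjective b) (G : (ι → α) → M) :
    ∑ f : ι → α with ∀ u v, f u = f v ↔ b u = b v, G f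
      = ∑ t : κ → α with Injective t, G (t ∘ b) := by
  have hbs : b ∘ surjInv hb = id := funext (surjInv_eq hb)
  refine sum_nbij' (fun f => f ∘ surjInv hb) (fun t => t ∘ b) (fun f hf => ?_) (fun t ht => ?_)
    (fun f hf => ?_) (fun t _ => ?_) (fun f hf => ?_)
  · simp only [mem_filter, mem_univ, true_and] at hf ⊢
    intro k l h
    simpa [surjInv_eq hb] using (hf _ _).1 h
  · simp only [mem_filter, mem_univ, true_and] at ht ⊢
    exact fun u v => ht.eq_iff
  · simp only [mem_filter, mem_univ, true_and] at hf
    ext u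
    exact (hf _ _).2 (surjInv_eq hb _)
  · rw [comp_assoc, hbs, comp_id]
  · simp only [mem_filter, mem_univ, true_and] at hf
    congr
    ext u
    exact ((hf _ _).2 (surjInv_eq hb _)).symm

theorem Finpartition.exists_fibres_eq {ι κ : Type*} [Fintype ι] [DecidableEq ι] [Fintype κ]
    [DecidableEq κ] (g : Finpartition (univ : Finset ι)) {A : κ → Finset ι} (hA : Injective A)
    (hparts : g.parts = univ.image A) :
    ∃ b : ι → κ, Surjective b ∧ (∀ k, A k = ({u | b u = k} : Finset ι)) ∧
      ∀ u v, (∃ B ∈ g.parts, u ∈ B ∧ v ∈ B) ↔ b u = b v := by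
  have mem_parts : ∀ k, A k ∈ g.parts := fun k => by simp [hparts]
  have cover : ∀ u, ∃ k, u ∈ A k := fun u => by
    obtain ⟨B, hB, hu⟩ := g.exists_mem (mem_univ u)
    obtain ⟨k, -, rfl⟩ := mem_image.1 (hparts ▸ hB)
    exact ⟨k, hu⟩
  choose b hb using cover
  have mem_iff : ∀ u k, u ∈ A k ↔ b u = k := fun u k =>
    ⟨fun hu => hA (g.eq_of_mem_parts (mem_parts _) (mem_parts _) (hb u) hu),
      fun h => h ▸ hb u⟩
  refine ⟨b, fun k => ?_, fun k => ?_, fun u v => ?_⟩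
  · obtain ⟨u, hu⟩ := g.nonempty_of_mem_parts (mem_parts k)
    exact ⟨u, (mem_iff u k).1 hu⟩
  · ext u; simp [mem_iff]
  · simp [hparts, mem_iff, eq_comm]

section Independence

variable {ι Ω α : Type*} [Fintype ι] [MeasurableSpace Ω] [MeasurableSpace α]
  [MeasurableSingletonClass α] {μ : Measure Ω} {X : ι → Ω → α}

theorem ProbabilityTheory.iIndepFun.measure_forall_eq (hX : iIndepFun X μ) (f : ι → α) :
    μ {ω | ∀ i, X i ω = f i} = ∏ i, μ {ω | X i ω = f i} := by
  rw [show {ω | ∀ i, X i ω = f i} = ⋂ i, X i ⁻¹' {f i} by ext; simp]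
  exact hX.meas_iInter fun i => ⟨{f i}, measurableSet_singleton _, rfl⟩

theorem ProbabilityTheory.iIndepFun.measure_preimage_finset (hXmeas : ∀ i, Measurable (X i))
    (hX : iIndepFun X μ) (S : Finset (ι → α)) :
    μ ((fun ω i => X i ω) ⁻¹' S) = ∑ f ∈ S, ∏ i, μ {ω | X i ω = f i} := by
  have hmeas : Measurable fun ω i => X i ω := measurable_pi_lambda _ hXmeas
  rw [← sum_measure_preimage_singleton S fun f _ => hmeas (measurableSet_singleton f)]
  refine sum_congr rfl fun f _ => ?_
  rw [← hX.measure_forall_eq]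
  congr 1
  ext ω
  simp [funext_iff]

theorem ProbabilityTheory.iIndepFun.toReal_measure_eq_iff_eq
    [DecidableEq ι] [Fintype α] [DecidableEq α] {κ : Type*} [Fintype κ] [DecidableEq κ]
    (hXmeas : ∀ i, Measurable (X i)) (hX : iIndepFun X μ) {p : ι → α → NNReal}
    (hp : ∀ j i, μ {ω | X j ω = i} = p j i) {b : ι → κ} (hb : Surjective b) :
    (μ {ω | ∀ u v, X u ω = X v ω ↔ b u = b v}).toReal
      = ∑ t : κ → α with Injective t, ∏ k, ∏ u with b u = k, (p u (t k) : ℝ) := by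
  have hE : {ω | ∀ u v, X u ω = X v ω ↔ b u = b v}
      = (fun ω i => X i ω) ⁻¹'
          ↑({f | ∀ u v, f u = f v ↔ b u = b v} : Finset (ι → α)) := by
    ext ω; simp
  rw [hE, hX.measure_preimage_finset hXmeas, sum_same_ker_eq_sum_injective_comp hb]
  simp only [hp, ← ENNReal.ofNNReal_finsetProd]
  rw [ENNReal.toReal_sum fun _ _ => ENNReal.coe_ne_top]
  refine sum_congr rfl fun t _ => ?_
  rw [ENNReal.coe_toReal, NNReal.coe_prod, ← prod_fiberwise univ b]
  refine prod_congr rfl fun k _ => prod_congr rfl fun u hu => ?_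
  rw [comp_apply, (mem_filter.1 hu).2]

end Independence

theorem sigmaProb_union {N M : ℕ} (p : Fin M → Fin N → NNReal) {A B : Finset (Fin M)}
    (hAB : Disjoint A B) :
    sigmaProb N M p (A ∪ B) = ∑ i, (∏ u ∈ A, (p u i : ℝ)) * ∏ u ∈ B, (p u i : ℝ) :=
  sum_congr rfl fun _ _ => prod_union hAB

theorem sigmaProb_univ_eq_sum_prod_fibres {N M : ℕ} (p : Fin M → Fin N → NNReal) {κ : Type*}
    [Fintype κ] [DecidableEq κ] (b : Fin M → κ) :
    sigmaProb N M p univ = ∑ i, ∏ k, ∏ u with b u = k, (p u i : ℝ) :=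
  sum_congr rfl fun _ _ => (prod_fiberwise univ b _).symm

theorem contact_graph_prob_three_cliques_general
    (N M : ℕ)
    {Ω : Type*} [MeasurableSpace Ω] (μ : Measure Ω)
    (X : Fin M → Ω → Fin N)
    (hXmeas : ∀ j, Measurable (X j))
    (hXindep : iIndepFun X μ)
    (p : Fin M → Fin N → NNReal)
    (hp : ∀ j i, μ {ω | X j ω = i} = p j i)
    (g : Finpartition (Finset.univ : Finset (Fin M)))
    (A₁ A₂ A₃ : Finset (Fin M))
    (h12 : A₁ ≠ A₂) (h13 : A₁ ≠ A₃) (h23 : A₂ ≠ A₃)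
    (hparts : g.parts = {A₁, A₂, A₃}) :
    (μ {ω | ∀ u v : Fin M, X u ω = X v ω ↔ ∃ B ∈ g.parts, u ∈ B ∧ v ∈ B}).toReal
      = sigmaProb N M p A₁ * sigmaProb N M p A₂ * sigmaProb N M p A₃
        - sigmaProb N M p (A₁ ∪ A₂) * sigmaProb N M p A₃
        - sigmaProb N M p (A₁ ∪ A₃) * sigmaProb N M p A₂
        - sigmaProb N M p (A₂ ∪ A₃) * sigmaProb N M p A₁
        + 2 * sigmaProb N M p Finset.univ := by
  obtain ⟨b, hb, hA, hsame⟩ := g.exists_fibres_eq (κ := Fin 3) (A := ![A₁, A₂, A₃])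
    (injective_triple_iff_ne.2 ⟨h12, h13, h23⟩)
    (by ext; simp [hparts, Fin.exists_fin_succ, eq_comm])
  obtain ⟨hA₁, hA₂, hA₃⟩ : A₁ ∈ g.parts ∧ A₂ ∈ g.parts ∧ A₃ ∈ g.parts := by
    simp [hparts]
  have disjoint {B C} (hB : B ∈ g.parts) (hC : C ∈ g.parts) (hBC : B ≠ C) : Disjoint B C :=
    g.disjoint hB hC hBC
  rw [sigmaProb_union p (disjoint hA₁ hA₂ h12), sigmaProb_union p (disjoint hA₁ hA₃ h13),
    sigmaProb_union p (disjoint hA₂ hA₃ h23), sigmaProb_univ_eq_sum_prod_fibres p b]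
  simp only [hsame]
  rw [hXindep.toReal_measure_eq_iff_eq hXmeas hp hb,
    sum_injective_fin_three_prod (F := fun k i => ∏ u with b u = k, (p u i : ℝ))]
  simp only [← hA, Matrix.cons_val_zero, Matrix.cons_val_one, Matrix.cons_val_two]
  rfl

/-- 3-clique formula: if the contact graph `g` has exactly three blocks
`A₁, A₂, A₃`, then `μ(E_g) = σ(A₁)σ(A₂)σ(A₃) − σ(A₁∪A₂)σ(A₃) − σ(A₁∪A₃)σ(A₂)
− σ(A₂∪A₃)σ(A₁) + 2σ(𝓜)`. -/
theorem contact_graph_prob_three_cliques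
    (N M : ℕ) (hN : 1 ≤ N) (hM : 1 ≤ M)
    {Ω : Type*} [MeasurableSpace Ω] (μ : Measure Ω) [IsProbabilityMeasure μ]
    (X : Fin M → Ω → Fin N)
    (hXmeas : ∀ j, Measurable (X j))
    (hXindep : iIndepFun X μ)
    (p : Fin M → Fin N → NNReal)
    (hp : ∀ j i, μ {ω | X j ω = i} = p j i)
    (hpsum : ∀ j, ∑ i, p j i = 1)
    (g : Finpartition (Finset.univ : Finset (Fin M)))
    (A₁ A₂ A₃ : Finset (Fin M))
    (h12 : A₁ ≠ A₂) (h13 : A₁ ≠ A₃) (h23 : A₂ ≠ A₃)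
    (hparts : g.parts = {A₁, A₂, A₃}) :
    (μ {ω | ∀ u v : Fin M, X u ω = X v ω ↔ ∃ B ∈ g.parts, u ∈ B ∧ v ∈ B}).toReal
      = sigmaProb N M p A₁ * sigmaProb N M p A₂ * sigmaProb N M p A₃
        - sigmaProb N M p (A₁ ∪ A₂) * sigmaProb N M p A₃
        - sigmaProb N M p (A₁ ∪ A₃) * sigmaProb N M p A₂
        - sigmaProb N M p (A₂ ∪ A₃) * sigmaProb N M p A₁
        + 2 * sigmaProb N M p Finset.univ :=
  contact_graph_prob_three_cliques_general N M μ X hXmeas hXindep p hp g A₁ A₂ A₃ h12 h13 h23 hparts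
end

section
/- (4-clique formula) Let g be a contact graph with exactly four blocks A_1, A_2, A_3, A_4. Writing A_{ij} = A_i ∪ A_j, A_{ijk} = A_i ∪ A_j ∪ A_k and 𝓜 = Fin M, μ(E_g) = σ(A_1)σ(A_2)σ(A_3)σ(A_4) − σ(A_{12})σ(A_3)σ(A_4) − σ(A_{13})σ(A_2)σ(A_4) − σ(A_{14})σ(A_2)σ(A_3) − σ(A_{23})σ(A_1)σ(A_4) − σ(A_{24})σ(A_1)σ(A_3) − σ(A_{34})σ(A_1)σ(A_2) + 2(σ(A_{123})σ(A_4) + σ(A_{124})σ(A_3) + σ(A_{134})σ(A_2) + σ(A_{234})σ(A_1)) + σ(A_{12})σ(A_{34}) + σ(A_{13})σ(A_{24}) + σ(A_{14})σ(A_{23}) − 6·σ(𝓜). -/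
/-!
Label the blocks by `κ : Fin M → Fin 4`. A configuration `v = (X u ω)ᵤ` realises the contact
graph exactly when `v = c ∘ κ` for an injective colouring `c : Fin 4 → Fin N` of the blocks, and
`c` is determined by `v`. By independence the event `v = c ∘ κ` has probability
`∏ₖ qₖ (c k)` with `qₖ i = ∏_{u ∈ Aₖ} p u i`, so `μ(E_g)` is the sum of `∏ₖ qₖ (c k)` over
injective `c`. Inclusion–exclusion, removing one index at a time via
`∑_{l ∉ {i, j, k}} d l = ∑ d - d i - d j - d k`, turns this sum over distinct quadruples into
the stated combination of the sums `∑ᵢ ∏_{k ∈ S} qₖ i = σ(⋃_{k ∈ S} Aₖ)`.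
-/

open MeasureTheory ProbabilityTheory

open Finset Function

section DistinctSums

variable {α R : Type*} [DecidableEq α]

theorem sum_filter_injective_piFinset_succ [AddCommMonoid R] {n : ℕ} (s : Finset α)
    (G : (Fin (n + 1) → α) → R) :
    ∑ c ∈ Fintype.piFinset (fun _ => s) with Injective c, G c =
      ∑ i ∈ s, ∑ c ∈ Fintype.piFinset (fun _ => s.erase i) with Injective c, G (Fin.cons i c) := by
  rw [sum_sigma']
  refine sum_nbij' (fun c => ⟨c 0, Fin.tail c⟩) (fun x => Fin.cons x.1 x.2) ?_ ?_ ?_ ?_ ?_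
  · simp only [mem_filter, Fintype.mem_piFinset, mem_sigma, mem_erase]
    rintro c ⟨hcs, hc⟩
    exact ⟨hcs 0, fun k => ⟨hc.ne (Fin.succ_ne_zero k), hcs _⟩, hc.comp (Fin.succ_injective _)⟩
  · simp only [mem_filter, Fintype.mem_piFinset, mem_sigma, mem_erase, Fin.cons_injective_iff]
    rintro ⟨i, c⟩ ⟨hi, hcs, hc⟩
    refine ⟨Fin.cases hi fun k => (hcs k).2, ?_, hc⟩
    rintro ⟨k, hk⟩
    exact (hcs k).1 hk
  · intro c _; simp
  · intro x _; simp
  · intro c _; simp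

variable [Fintype α] [CommRing R]

theorem sum_filter_injective_fin_four (f : Fin 4 → α → R) :
    ∑ c : Fin 4 → α with Injective c, ∏ k, f k (c k) =
      ∑ i, ∑ j ∈ univ.erase i, ∑ k ∈ (univ.erase i).erase j,
        ∑ l ∈ ((univ.erase i).erase j).erase k, f 0 i * f 1 j * f 2 k * f 3 l := by
  rw [← Fintype.piFinset_univ]
  simp only [sum_filter_injective_piFinset_succ]
  simp only [Fintype.piFinset_of_isEmpty, injective_of_subsingleton, filter_true,
    Fintype.sum_unique, Fin.prod_univ_succ, Fin.prod_univ_zero, Fin.cons_zero, Fin.cons_succ,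
    mul_one, mul_assoc]
  rfl

theorem sum_sum_erase_mul (a b : α → R) :
    ∑ i, ∑ j ∈ univ.erase i, a i * b j = (∑ i, a i) * (∑ i, b i) - ∑ i, a i * b i := by
  simp_rw [← mul_sum, sum_erase_eq_sub (mem_univ _), mul_sub, sum_sub_distrib, sum_mul]

theorem sum_sum_sum_erase_mul (a b c : α → R) :
    ∑ i, ∑ j ∈ univ.erase i, ∑ k ∈ (univ.erase i).erase j, a i * b j * c k =
      (∑ i, a i) * (∑ i, b i) * (∑ i, c i) - (∑ i, a i * b i) * (∑ i, c i)
        - (∑ i, a i * c i) * (∑ i, b i) - (∑ i, a i) * (∑ i, b i * c i)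
        + 2 * ∑ i, a i * b i * c i := by
  have peel : ∀ i, ∀ j ∈ univ.erase i, ∑ k ∈ (univ.erase i).erase j, a i * b j * c k =
      a i * b j * (∑ k, c k) - (a i * c i) * b j - a i * (b j * c j) := by
    intro i j hj
    rw [← mul_sum, sum_erase_eq_sub hj, sum_erase_eq_sub (mem_univ _)]
    ring
  rw [sum_congr rfl fun i _ => sum_congr rfl (peel i)]
  simp_rw [sum_sub_distrib, ← sum_mul]
  rw [sum_sum_erase_mul, sum_sum_erase_mul (fun i => a i * c i),
    sum_sum_erase_mul a (fun i => b i * c i)]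
  simp only [mul_comm, mul_left_comm]
  ring

theorem sum_sum_sum_sum_erase_mul (a b c d : α → R) :
    ∑ i, ∑ j ∈ univ.erase i, ∑ k ∈ (univ.erase i).erase j,
        ∑ l ∈ ((univ.erase i).erase j).erase k, a i * b j * c k * d l =
      (∑ i, a i) * (∑ i, b i) * (∑ i, c i) * (∑ i, d i)
        - (∑ i, a i * b i) * (∑ i, c i) * (∑ i, d i)
        - (∑ i, a i * c i) * (∑ i, b i) * (∑ i, d i)
        - (∑ i, a i * d i) * (∑ i, b i) * (∑ i, c i)
        - (∑ i, b i * c i) * (∑ i, a i) * (∑ i, d i)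
        - (∑ i, b i * d i) * (∑ i, a i) * (∑ i, c i)
        - (∑ i, c i * d i) * (∑ i, a i) * (∑ i, b i)
        + 2 * ((∑ i, a i * b i * c i) * (∑ i, d i)
             + (∑ i, a i * b i * d i) * (∑ i, c i)
             + (∑ i, a i * c i * d i) * (∑ i, b i)
             + (∑ i, b i * c i * d i) * (∑ i, a i))
        + (∑ i, a i * b i) * (∑ i, c i * d i)
        + (∑ i, a i * c i) * (∑ i, b i * d i)
        + (∑ i, a i * d i) * (∑ i, b i * c i)
        - 6 * (∑ i, a i * b i * c i * d i) := by
  have peel : ∀ i, ∀ j ∈ univ.erase i, ∀ k ∈ (univ.erase i).erase j,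
      ∑ l ∈ ((univ.erase i).erase j).erase k, a i * b j * c k * d l =
        a i * b j * c k * (∑ l, d l) - (a i * d i) * b j * c k - a i * (b j * d j) * c k
          - a i * b j * (c k * d k) := by
    intro i j hj k hk
    rw [← mul_sum, sum_erase_eq_sub hk, sum_erase_eq_sub hj, sum_erase_eq_sub (mem_univ _)]
    ring
  rw [sum_congr rfl fun i _ => sum_congr rfl fun j hj => sum_congr rfl (peel i j hj)]
  simp_rw [sum_sub_distrib, ← sum_mul]
  rw [sum_sum_sum_erase_mul, sum_sum_sum_erase_mul (fun i => a i * d i),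
    sum_sum_sum_erase_mul a (fun i => b i * d i), sum_sum_sum_erase_mul a b (fun i => c i * d i)]
  simp only [mul_comm, mul_left_comm]
  ring

end DistinctSums

section LevelSets

variable {ι β α R M : Type*} [Fintype ι] [DecidableEq ι] [Fintype β] [DecidableEq β]
  [Fintype α] [DecidableEq α]

theorem sum_filter_ker_eq_sum_injective_comp [AddCommMonoid R] {κ : ι → β} (hκ : Surjective κ)
    [DecidablePred fun v : ι → α => ∀ u w, v u = v w ↔ κ u = κ w] (F : (ι → α) → R) :
    ∑ v : ι → α with ∀ u w, v u = v w ↔ κ u = κ w, F v =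
      ∑ c : β → α with Injective c, F (c ∘ κ) := by
  symm
  refine sum_nbij' (· ∘ κ) (· ∘ surjInv hκ) ?_ ?_ ?_ ?_ (fun _ _ => rfl)
  · simp only [mem_filter, mem_univ, true_and, comp_apply]
    exact fun c hc u w => hc.eq_iff
  · simp only [mem_filter, mem_univ, true_and]
    intro v hv b b' hbb'
    rwa [comp_apply, comp_apply, hv, surjInv_eq hκ, surjInv_eq hκ] at hbb'
  · intro c _
    funext b
    simp [surjInv_eq]
  · simp only [mem_filter, mem_univ, true_and]
    intro v hv
    funext u
    exact (hv _ _).2 (surjInv_eq hκ (κ u))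

theorem prod_fiberwise_of_mem_iff [CommMonoid M] {κ : ι → β} {A : β → Finset ι}
    (hκ : ∀ u b, κ u = b ↔ u ∈ A b) (w : ι → β → M) :
    ∏ u, w u (κ u) = ∏ b, ∏ u ∈ A b, w u b := by
  rw [← prod_fiberwise univ κ (fun u => w u (κ u))]
  refine prod_congr rfl fun b _ => prod_congr (by ext u; simp [hκ]) fun u hu => ?_
  rw [(hκ u b).2 hu]

end LevelSets

namespace Finpartition

variable {ι β : Type*} [Fintype ι] [DecidableEq ι] {P : Finpartition (univ : Finset ι)}
  {A : β → Finset ι}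

theorem exists_index (hA : Injective A) (hP : ∀ B, B ∈ P.parts ↔ ∃ b, A b = B) :
    ∃ κ : ι → β, ∀ u b, κ u = b ↔ u ∈ A b := by
  have hex : ∀ u, ∃ b, u ∈ A b := fun u => by
    obtain ⟨b, hb⟩ := (hP _).1 (P.part_mem.2 (mem_univ u))
    exact ⟨b, hb ▸ P.mem_part (mem_univ u)⟩
  choose κ hκ using hex
  refine ⟨κ, fun u b => ⟨fun h => h ▸ hκ u, fun hu => hA ?_⟩⟩
  exact P.eq_of_mem_parts ((hP _).2 ⟨_, rfl⟩) ((hP _).2 ⟨_, rfl⟩) (hκ u) hu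

variable {κ : ι → β}

theorem exists_mem_parts_iff_index_eq (hP : ∀ B, B ∈ P.parts ↔ ∃ b, A b = B)
    (hκ : ∀ u b, κ u = b ↔ u ∈ A b) (u w : ι) :
    (∃ B ∈ P.parts, u ∈ B ∧ w ∈ B) ↔ κ u = κ w := by
  constructor
  · rintro ⟨B, hB, hu, hw⟩
    obtain ⟨b, rfl⟩ := (hP B).1 hB
    rw [(hκ u b).2 hu, (hκ w b).2 hw]
  · intro h
    exact ⟨A (κ u), (hP _).2 ⟨_, rfl⟩, (hκ u _).1 rfl, (hκ w _).1 h.symm⟩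

theorem index_surjective (hP : ∀ B, B ∈ P.parts ↔ ∃ b, A b = B)
    (hκ : ∀ u b, κ u = b ↔ u ∈ A b) : Surjective κ := fun b => by
  obtain ⟨u, hu⟩ := P.nonempty_of_mem_parts ((hP _).2 ⟨b, rfl⟩)
  exact ⟨u, (hκ u b).2 hu⟩

end Finpartition

theorem ProbabilityTheory.iIndepFun.measure_mem_finset_eq_sum_prod {Ω ι α : Type*}
    [MeasurableSpace Ω] {μ : Measure Ω} [Fintype ι] [MeasurableSpace α]
    [MeasurableSingletonClass α] {X : ι → Ω → α} (hind : iIndepFun X μ)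
    (hX : ∀ i, Measurable (X i)) (S : Finset (ι → α)) :
    μ {ω | (fun i => X i ω) ∈ S} = ∑ v ∈ S, ∏ i, μ {ω | X i ω = v i} := by
  have hfibre : ∀ v : ι → α, (fun ω i => X i ω) ⁻¹' {v} = ⋂ i, X i ⁻¹' {v i} := fun v => by
    ext ω; simp [funext_iff]
  rw [show {ω | (fun i => X i ω) ∈ S} = (fun ω i => X i ω) ⁻¹' ↑S from rfl,
    ← sum_measure_preimage_singleton S fun v _ => ?_]
  · refine sum_congr rfl fun v _ => ?_
    rw [hfibre, hind.meas_iInter fun i => ⟨{v i}, measurableSet_singleton _, rfl⟩]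
    rfl
  · rw [hfibre]
    exact .iInter fun i => hX i (measurableSet_singleton _)

theorem contact_graph_prob_four_cliques_general
    (N M : ℕ)
    {Ω : Type*} [MeasurableSpace Ω] (μ : Measure Ω)
    (X : Fin M → Ω → Fin N)
    (hXmeas : ∀ j, Measurable (X j))
    (hXindep : iIndepFun X μ)
    (p : Fin M → Fin N → NNReal)
    (hp : ∀ j i, μ {ω | X j ω = i} = p j i)
    (g : Finpartition (Finset.univ : Finset (Fin M)))
    (A₁ A₂ A₃ A₄ : Finset (Fin M))
    (h12 : A₁ ≠ A₂) (h13 : A₁ ≠ A₃) (h14 : A₁ ≠ A₄)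
    (h23 : A₂ ≠ A₃) (h24 : A₂ ≠ A₄) (h34 : A₃ ≠ A₄)
    (hparts : g.parts = {A₁, A₂, A₃, A₄}) :
    (μ {ω | ∀ u v : Fin M, X u ω = X v ω ↔ ∃ B ∈ g.parts, u ∈ B ∧ v ∈ B}).toReal
      = sigmaProb N M p A₁ * sigmaProb N M p A₂ * sigmaProb N M p A₃ * sigmaProb N M p A₄
        - sigmaProb N M p (A₁ ∪ A₂) * sigmaProb N M p A₃ * sigmaProb N M p A₄
        - sigmaProb N M p (A₁ ∪ A₃) * sigmaProb N M p A₂ * sigmaProb N M p A₄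
        - sigmaProb N M p (A₁ ∪ A₄) * sigmaProb N M p A₂ * sigmaProb N M p A₃
        - sigmaProb N M p (A₂ ∪ A₃) * sigmaProb N M p A₁ * sigmaProb N M p A₄
        - sigmaProb N M p (A₂ ∪ A₄) * sigmaProb N M p A₁ * sigmaProb N M p A₃
        - sigmaProb N M p (A₃ ∪ A₄) * sigmaProb N M p A₁ * sigmaProb N M p A₂
        + 2 * (sigmaProb N M p (A₁ ∪ A₂ ∪ A₃) * sigmaProb N M p A₄
             + sigmaProb N M p (A₁ ∪ A₂ ∪ A₄) * sigmaProb N M p A₃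
             + sigmaProb N M p (A₁ ∪ A₃ ∪ A₄) * sigmaProb N M p A₂
             + sigmaProb N M p (A₂ ∪ A₃ ∪ A₄) * sigmaProb N M p A₁)
        + sigmaProb N M p (A₁ ∪ A₂) * sigmaProb N M p (A₃ ∪ A₄)
        + sigmaProb N M p (A₁ ∪ A₃) * sigmaProb N M p (A₂ ∪ A₄)
        + sigmaProb N M p (A₁ ∪ A₄) * sigmaProb N M p (A₂ ∪ A₃)
        - 6 * sigmaProb N M p Finset.univ := by
  set A : Fin 4 → Finset (Fin M) := ![A₁, A₂, A₃, A₄]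
  have hA : Injective A := by
    intro k l
    fin_cases k <;> fin_cases l <;> simp [A, h12, h13, h14, h23, h24, h34, Ne.symm]
  have hP : ∀ B, B ∈ g.parts ↔ ∃ k, A k = B := by
    simp [hparts, A, Fin.exists_fin_succ, eq_comm]
  obtain ⟨κ, hκ⟩ := g.exists_index hA hP
  have hevent : {ω | ∀ u v, X u ω = X v ω ↔ ∃ B ∈ g.parts, u ∈ B ∧ v ∈ B} =
      {ω | (fun u => X u ω) ∈ ({v | ∀ u w, v u = v w ↔ κ u = κ w} : Finset (Fin M → Fin N))} := by
    ext ω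
    simp [g.exists_mem_parts_iff_index_eq hP hκ]
  rw [hevent, hXindep.measure_mem_finset_eq_sum_prod hXmeas]
  simp only [hp, ← ENNReal.ofNNReal_finsetProd, ← ENNReal.ofNNReal_finsetSum, ENNReal.coe_toReal,
    NNReal.coe_sum, NNReal.coe_prod]
  rw [sum_filter_ker_eq_sum_injective_comp (g.index_surjective hP hκ),
    sum_congr rfl fun c _ => prod_fiberwise_of_mem_iff hκ fun u k => (p u (c k) : ℝ),
    sum_filter_injective_fin_four fun k i => ∏ u ∈ A k, (p u i : ℝ), sum_sum_sum_sum_erase_mul]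
  have hdisj : Disjoint A₁ A₂ ∧ Disjoint A₁ A₃ ∧ Disjoint A₁ A₄ ∧ Disjoint A₂ A₃ ∧
      Disjoint A₂ A₄ ∧ Disjoint A₃ A₄ := by
    refine ⟨?_, ?_, ?_, ?_, ?_, ?_⟩ <;>
      exact g.disjoint (by simp [hparts]) (by simp [hparts]) ‹_›
  have hU : univ = A₁ ∪ A₂ ∪ A₃ ∪ A₄ := by
    simpa [hparts, union_assoc] using g.biUnion_parts.symm
  simp only [sigmaProb, hU, prod_union, disjoint_union_left, hdisj, and_self]
  -- the two sides now differ only in `A k` versus the `k`-th of `A₁, A₂, A₃, A₄`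
  rfl

/-- 4-clique formula: the probability of a contact graph with exactly four
blocks `A₁, A₂, A₃, A₄`, expressed in terms of sigma products over amassed cliques. -/
theorem contact_graph_prob_four_cliques
    (N M : ℕ) (hN : 1 ≤ N) (hM : 1 ≤ M)
    {Ω : Type*} [MeasurableSpace Ω] (μ : Measure Ω) [IsProbabilityMeasure μ]
    (X : Fin M → Ω → Fin N)
    (hXmeas : ∀ j, Measurable (X j))
    (hXindep : iIndepFun X μ)
    (p : Fin M → Fin N → NNReal)
    (hp : ∀ j i, μ {ω | X j ω = i} = p j i)
    (hpsum : ∀ j, ∑ i, p j i = 1)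
    (g : Finpartition (Finset.univ : Finset (Fin M)))
    (A₁ A₂ A₃ A₄ : Finset (Fin M))
    (h12 : A₁ ≠ A₂) (h13 : A₁ ≠ A₃) (h14 : A₁ ≠ A₄)
    (h23 : A₂ ≠ A₃) (h24 : A₂ ≠ A₄) (h34 : A₃ ≠ A₄)
    (hparts : g.parts = {A₁, A₂, A₃, A₄}) :
    (μ {ω | ∀ u v : Fin M, X u ω = X v ω ↔ ∃ B ∈ g.parts, u ∈ B ∧ v ∈ B}).toReal
      = sigmaProb N M p A₁ * sigmaProb N M p A₂ * sigmaProb N M p A₃ * sigmaProb N M p A₄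
        - sigmaProb N M p (A₁ ∪ A₂) * sigmaProb N M p A₃ * sigmaProb N M p A₄
        - sigmaProb N M p (A₁ ∪ A₃) * sigmaProb N M p A₂ * sigmaProb N M p A₄
        - sigmaProb N M p (A₁ ∪ A₄) * sigmaProb N M p A₂ * sigmaProb N M p A₃
        - sigmaProb N M p (A₂ ∪ A₃) * sigmaProb N M p A₁ * sigmaProb N M p A₄
        - sigmaProb N M p (A₂ ∪ A₄) * sigmaProb N M p A₁ * sigmaProb N M p A₃
        - sigmaProb N M p (A₃ ∪ A₄) * sigmaProb N M p A₁ * sigmaProb N M p A₂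
        + 2 * (sigmaProb N M p (A₁ ∪ A₂ ∪ A₃) * sigmaProb N M p A₄
             + sigmaProb N M p (A₁ ∪ A₂ ∪ A₄) * sigmaProb N M p A₃
             + sigmaProb N M p (A₁ ∪ A₃ ∪ A₄) * sigmaProb N M p A₂
             + sigmaProb N M p (A₂ ∪ A₃ ∪ A₄) * sigmaProb N M p A₁)
        + sigmaProb N M p (A₁ ∪ A₂) * sigmaProb N M p (A₃ ∪ A₄)
        + sigmaProb N M p (A₁ ∪ A₃) * sigmaProb N M p (A₂ ∪ A₄)
        + sigmaProb N M p (A₁ ∪ A₄) * sigmaProb N M p (A₂ ∪ A₃)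
        - 6 * sigmaProb N M p Finset.univ :=
  contact_graph_prob_four_cliques_general N M μ X hXmeas hXindep p hp g A₁ A₂ A₃ A₄ h12 h13 h14 h23
    h24 h34 hparts
end

section
/- (Stirling recursion lemma, Appendix B) Let S(m, l) denote the number of partitions of an m-element set into exactly l nonempty blocks (the Stirling number of the second kind, definable as the number of Finpartitions of Fin m having exactly l parts). Let x : ℕ → ℝ satisfy x(1) = 1 and, for every m ≥ 2, x(m) = − ∑_{l=1}^{m−1} S(m, l) · x(l). Then x(m) = (−1)^{m−1} (m−1)! for every m ≥ 1. -/
/-!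
The values `(-1)^(l-1) (l-1)!` satisfy the recursion because
`∑_{l=1}^{m} S(m,l) (-1)^(l-1) (l-1)! = 0` for `m ≥ 2`, so the claim follows by strong induction.
To get at this identity, count surjections `Fin m → Fin l`: on the one hand there are `l! S(m,l)`
of them (a partition together with a labelling of its blocks), on the other hand splitting off
the image of `0` shows that their number `s(m,l)` satisfies
`s(m+1,l+1) = (l+1) (s(m,l+1) + s(m,l))`. Hence `S(n+1,k+1) = (k+1) S(n,k+1) + S(n,k)`, i.e.
`S` is Mathlib's `Nat.stirlingSecond`, and with this recurrence the sum
`∑_k (-1)^k k! S(n+1,k+1)` telescopes to `S(n,0)`.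
-/

open Finset Function
open scoped Nat

/-- The Stirling number of the second kind `S(m, l)`: the number of partitions of an
`m`-element set into exactly `l` nonempty blocks. -/
def stirlingSecond (m l : ℕ) : ℕ :=
  Fintype.card {ρ : Finpartition (Finset.univ : Finset (Fin m)) // ρ.parts.card = l}

lemma Function.Surjective.exists_equiv_comp_eq {α β γ : Type*} {p : α → γ} {f : α → β}
    (hp : Surjective p) (hf : Surjective f) (h : ∀ a b, p a = p b ↔ f a = f b) :
    ∃ e : γ ≃ β, e ∘ p = f :=
  ⟨(Setoid.quotientKerEquivOfSurjective p hp).symm.trans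
    ((Quotient.congrRight h).trans (Setoid.quotientKerEquivOfSurjective f hf)),
    funext fun a ↦ (h _ _).1 (surjInv_eq hp (p a))⟩

lemma Fintype.card_equiv_eq_ite {α β : Type*} [Fintype α] [DecidableEq α] [Fintype β]
    [DecidableEq β] :
    Fintype.card (α ≃ β) = if Fintype.card α = Fintype.card β then (Fintype.card α)! else 0 := by
  split_ifs with h
  · exact Fintype.card_equiv (Fintype.equivOfCardEq h)
  · exact Fintype.card_eq_zero_iff.2 ⟨fun e ↦ h (Fintype.card_congr e)⟩

lemma Set.insert_eq_univ_iff {β : Type*} {s : Set β} {v : β} :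
    insert v s = Set.univ ↔ s = Set.univ ∨ s = {v}ᶜ := by
  refine ⟨fun h ↦ ?_, by rintro (rfl | rfl) <;> simp [Set.eq_univ_iff_forall, em]⟩
  by_cases hv : v ∈ s
  · exact .inl (by rwa [Set.insert_eq_of_mem hv] at h)
  · refine .inr (Set.ext fun x ↦ ⟨fun hx hxv ↦ hv (hxv ▸ hx), fun hxv ↦ ?_⟩)
    exact (Set.eq_univ_iff_forall.1 h x).resolve_left hxv

lemma Fin.surjective_cons_iff {m : ℕ} {β : Type*} {v : β} {g : Fin m → β} :
    Surjective (Fin.cons v g : Fin (m + 1) → β) ↔ Surjective g ∨ Set.range g = {v}ᶜ := by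
  rw [← Set.range_eq_univ, Fin.range_cons, Set.insert_eq_univ_iff, Set.range_eq_univ]

namespace Finpartition

variable {α : Type*} [Fintype α] [DecidableEq α] (P : Finpartition (univ : Finset α))

def partOf (a : α) : P.parts := ⟨P.part a, P.part_mem.2 (mem_univ a)⟩

lemma partOf_eq_partOf_iff {a b : α} : P.partOf a = P.partOf b ↔ a ∈ P.part b := by
  rw [partOf, partOf, Subtype.mk.injEq, P.mem_part_iff_part_eq_part (mem_univ a) (mem_univ b)]

lemma mem_parts_iff_exists_part_eq {p : Finset α} : p ∈ P.parts ↔ ∃ a, P.part a = p := by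
  refine ⟨fun hp ↦ ?_, fun ⟨a, ha⟩ ↦ ha ▸ P.part_mem.2 (mem_univ a)⟩
  obtain ⟨a, -, ha⟩ := P.part_surjOn hp
  exact ⟨a, ha⟩

lemma surjective_partOf : Surjective P.partOf := fun ⟨_, hp⟩ ↦
  (P.mem_parts_iff_exists_part_eq.1 hp).imp fun _ ha ↦ Subtype.ext ha

lemma ext_of_partOf {Q : Finpartition (univ : Finset α)}
    (h : ∀ a b, P.partOf a = P.partOf b ↔ Q.partOf a = Q.partOf b) : P = Q := by
  have hpart : P.part = Q.part := by
    ext b a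
    rw [← partOf_eq_partOf_iff, h, partOf_eq_partOf_iff]
  ext p
  rw [mem_parts_iff_exists_part_eq, mem_parts_iff_exists_part_eq, hpart]

lemma partOf_ofSetoid_eq_iff (s : Setoid α) [DecidableRel s.r] {a b : α} :
    (ofSetoid s).partOf a = (ofSetoid s).partOf b ↔ s a b := by
  rw [partOf_eq_partOf_iff, mem_part_ofSetoid_iff_rel, Setoid.comm']

noncomputable def sigmaEquivSurjective {β : Type*} [DecidableEq β] :
    (Σ P : Finpartition (univ : Finset α), P.parts ≃ β) ≃ {f : α → β // Surjective f} := by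
  refine Equiv.ofBijective (fun P ↦ ⟨P.2 ∘ P.1.partOf, P.2.surjective.comp P.1.surjective_partOf⟩)
    ⟨?_, fun ⟨f, hf⟩ ↦ ?_⟩
  · rintro ⟨P, e⟩ ⟨Q, e'⟩ h
    have h' (a : α) : e (P.partOf a) = e' (Q.partOf a) := congrFun (congrArg Subtype.val h) a
    obtain rfl : P = Q := P.ext_of_partOf fun a b ↦ by
      rw [← e.apply_eq_iff_eq, ← e'.apply_eq_iff_eq, h', h']
    obtain rfl : e = e' := Equiv.ext fun p ↦ by
      obtain ⟨a, rfl⟩ := P.surjective_partOf p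
      exact h' a
    rfl
  · let _ : DecidableRel (Setoid.ker f) := fun a b ↦ inferInstanceAs (Decidable (f a = f b))
    let P := ofSetoid (Setoid.ker f)
    obtain ⟨e, he⟩ := P.surjective_partOf.exists_equiv_comp_eq hf
      fun _ _ ↦ partOf_ofSetoid_eq_iff _
    exact ⟨⟨P, e⟩, Subtype.ext he⟩

end Finpartition

def surjCount (m l : ℕ) : ℕ := Fintype.card {f : Fin m → Fin l // Surjective f}

lemma surjCount_eq_factorial_mul_stirlingSecond (m l : ℕ) :
    surjCount m l = l ! * stirlingSecond m l := by
  rw [surjCount, ← Fintype.card_congr Finpartition.sigmaEquivSurjective, Fintype.card_sigma,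
    stirlingSecond, Fintype.card_subtype]
  simp only [Fintype.card_equiv_eq_ite, Fintype.card_coe, Fintype.card_fin, sum_ite,
    sum_const_zero, add_zero]
  rw [sum_const_nat fun P hP ↦ by rw [(mem_filter.1 hP).2], mul_comm]

lemma card_range_eq_compl_singleton (m l : ℕ) (v : Fin (l + 1)) :
    Fintype.card {g : Fin m → Fin (l + 1) // Set.range g = {v}ᶜ} = surjCount m l := by
  refine (Fintype.card_congr (Equiv.ofBijective
    (fun h ↦ ⟨v.succAbove ∘ h.1, by
      rw [Set.range_comp, h.2.range_eq, Set.image_univ, Fin.range_succAbove]⟩) ⟨?_, ?_⟩)).symm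
  · intro h h' hh
    exact Subtype.ext (Fin.succAbove_right_injective.comp_left (congrArg Subtype.val hh))
  · rintro ⟨g, hg⟩
    obtain ⟨h, rfl⟩ :=
      Set.range_subset_range_iff_exists_comp.1 (hg.trans_subset (Fin.range_succAbove v).ge)
    refine ⟨⟨h, ?_⟩, rfl⟩
    rw [← Fin.range_succAbove v, Set.range_comp, ← Set.image_univ (f := v.succAbove)] at hg
    exact Set.range_eq_univ.1 (Set.image_injective.2 Fin.succAbove_right_injective hg)

lemma surjCount_succ_succ (m l : ℕ) :
    surjCount (m + 1) (l + 1) = (l + 1) * (surjCount m (l + 1) + surjCount m l) := by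
  let SurjCons (v : Fin (l + 1)) (g : Fin m → Fin (l + 1)) : Prop :=
    Surjective (Fin.cons v g : Fin (m + 1) → Fin (l + 1))
  have hcons : surjCount (m + 1) (l + 1) = Fintype.card (Σ v, {g // SurjCons v g}) :=
    Fintype.card_congr <|
      (Equiv.subtypeEquiv (Fin.consEquiv fun _ ↦ Fin (l + 1)) fun _ ↦ Iff.rfl).symm.trans
        (Equiv.subtypeProdEquivSigmaSubtype SurjCons)
  have hfiber (v : Fin (l + 1)) :
      Fintype.card {g // SurjCons v g} = surjCount m (l + 1) + surjCount m l := by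
    rw [Fintype.card_congr (Equiv.subtypeEquivRight fun _ ↦ Fin.surjective_cons_iff),
      Fintype.card_subtype_or_disjoint, card_range_eq_compl_singleton]
    · rfl
    · exact fun r hsurj hrange g hg ↦ (hrange g hg ▸ hsurj g hg v : v ∈ ({v}ᶜ : Set _)) rfl
  rw [hcons, Fintype.card_sigma]
  simp only [hfiber, sum_const, card_univ, Fintype.card_fin, smul_eq_mul]

lemma surjCount_eq_factorial_mul_nat_stirlingSecond (m l : ℕ) :
    surjCount m l = l ! * Nat.stirlingSecond m l := by
  induction m generalizing l with
  | zero =>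
    cases l with
    | zero => decide
    | succ l => exact Fintype.card_eq_zero_iff.2 ⟨fun ⟨_, hf⟩ ↦ (hf 0).elim fun i _ ↦ i.elim0⟩
  | succ m ih =>
    cases l with
    | zero => simp [surjCount]
    | succ l =>
      rw [surjCount_succ_succ, ih, ih, Nat.stirlingSecond_succ_succ, Nat.factorial_succ]
      ring

theorem stirlingSecond_eq_nat_stirlingSecond (m l : ℕ) :
    stirlingSecond m l = Nat.stirlingSecond m l :=
  Nat.eq_of_mul_eq_mul_left l.factorial_pos <| by
    rw [← surjCount_eq_factorial_mul_stirlingSecond, surjCount_eq_factorial_mul_nat_stirlingSecond]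

theorem Nat.sum_range_neg_one_pow_mul_factorial_mul_stirlingSecond {R : Type*} [CommRing R]
    (n : ℕ) :
    ∑ k ∈ range (n + 1), (-1 : R) ^ k * k ! * Nat.stirlingSecond (n + 1) (k + 1) =
      if n = 0 then 1 else 0 := by
  set a : ℕ → R := fun k ↦ (-1) ^ k * k ! * Nat.stirlingSecond n k
  have hstep (k : ℕ) :
      (-1 : R) ^ k * k ! * Nat.stirlingSecond (n + 1) (k + 1) = a k - a (k + 1) := by
    simp only [a, Nat.stirlingSecond_succ_succ, Nat.factorial_succ]
    push_cast
    ring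
  rw [sum_congr rfl fun k _ ↦ hstep k, sum_range_sub']
  cases n <;> simp [a, Nat.stirlingSecond_eq_zero_of_lt]

/-- Stirling recursion lemma, Appendix B: if `x 1 = 1` and
`x m = −∑_{l=1}^{m−1} S(m,l)·x l` for all `m ≥ 2`, then `x m = (−1)^{m−1}(m−1)!`
for all `m ≥ 1`. -/
theorem stirling_recursion_lemma
    (x : ℕ → ℝ) (hx1 : x 1 = 1)
    (hrec : ∀ m, 2 ≤ m →
      x m = -∑ l ∈ Finset.Icc 1 (m - 1), (stirlingSecond m l : ℝ) * x l) :
    ∀ m, 1 ≤ m → x m = (-1 : ℝ) ^ (m - 1) * (m - 1).factorial := by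
  intro m hm
  induction m using Nat.strong_induction_on with
  | _ m ih =>
  obtain ⟨n, rfl⟩ := Nat.exists_eq_add_of_le' hm
  rcases n.eq_zero_or_pos with rfl | hn
  · simpa using hx1
  have hsum := Nat.sum_range_neg_one_pow_mul_factorial_mul_stirlingSecond (R := ℝ) n
  rw [sum_range_succ, Nat.stirlingSecond_self, if_neg hn.ne'] at hsum
  have hterm (k : ℕ) (hk : k ∈ range n) :
      (stirlingSecond (n + 1) (1 + k) : ℝ) * x (1 + k) =
        (-1) ^ k * k ! * Nat.stirlingSecond (n + 1) (k + 1) := by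
    rw [ih (1 + k) (by simp at hk; omega) (by omega), stirlingSecond_eq_nat_stirlingSecond,
      add_tsub_cancel_left, add_comm 1 k]
    ring
  rw [hrec (n + 1) (by omega), add_tsub_cancel_right, ← Ico_add_one_right_eq_Icc,
    sum_Ico_eq_sum_range, add_tsub_cancel_right, sum_congr rfl hterm]
  linear_combination -hsum
end

section
/- (Exchangeability of identically distributed walkers) Suppose additionally that all walkers have the same marginal distribution, i.e. p j = q for every j : Fin M and some fixed probability vector q : Fin N → ℝ≥0. If g and g' are two contact graphs whose multisets of block sizes coincide, then μ(E_g) = μ(E_{g'}). -/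
open MeasureTheory ProbabilityTheory

/-!
Independence with a common marginal makes the joint law of the walkers a product of identical
factors, hence invariant under permuting the walkers. Two partitions with the same multiset of
block sizes are carried onto each other by a permutation of the walkers (match the blocks by size,
then the elements inside matched blocks), and that permutation carries `E_g` onto `E_g'`.
-/

theorem Finset.card_fiber_eq_count_map {α γ : Type*} [DecidableEq γ] (s : Finset α)
    (f : α → γ) (c : γ) [Fintype {x : s // f x = c}] :
    Fintype.card {x : s // f x = c} = (s.val.map f).count c := by
  rw [Multiset.count_map, Fintype.card_subtype, Finset.univ_eq_attach,
    Finset.filter_attach (fun a => f a = c), Finset.card_map, Finset.card_attach]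
  simp only [eq_comm]
  rfl

theorem Finset.exists_equiv_of_map_val_eq {α β γ : Type*} {s : Finset α} {t : Finset β}
    {f : α → γ} {g : β → γ} (h : s.val.map f = t.val.map g) :
    ∃ e : s ≃ t, ∀ x, g (e x) = f x := by
  classical
  have hfiber (c : γ) : Fintype.card {x : s // f x = c} = Fintype.card {y : t // g y = c} := by
    rw [card_fiber_eq_count_map, card_fiber_eq_count_map, h]
  exact ⟨.ofFiberEquiv fun c => Fintype.equivOfCardEq (hfiber c),
    Equiv.ofFiberEquiv_map (f := fun x : s => f x) (g := fun y : t => g y) _⟩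

theorem Finpartition.part_eq_part_iff_exists {α : Type*} [DecidableEq α] {s : Finset α}
    (P : Finpartition s) {a b : α} (ha : a ∈ s) (hb : b ∈ s) :
    P.part a = P.part b ↔ ∃ B ∈ P.parts, a ∈ B ∧ b ∈ B :=
  (P.mem_part_iff_part_eq_part ha hb).symm.trans P.mem_part_iff_exists

theorem Finpartition.exists_equiv_part_eq_part_iff {α β : Type*} [DecidableEq α] [DecidableEq β]
    {s : Finset α} {t : Finset β} (P : Finpartition s) (Q : Finpartition t)
    (h : P.parts.val.map Finset.card = Q.parts.val.map Finset.card) :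
    ∃ e : s ≃ t, ∀ a b : s, P.part a = P.part b ↔ Q.part (e a) = Q.part (e b) := by
  obtain ⟨E, hE⟩ := Finset.exists_equiv_of_map_val_eq h
  obtain ⟨f, hf⟩ := P.exists_enumeration
  obtain ⟨f', hf'⟩ := Q.exists_enumeration
  let blocks : (Σ B : P.parts, Fin B.1.card) ≃ Σ B : Q.parts, Fin B.1.card :=
    E.sigmaCongr fun B => finCongr (hE B).symm
  refine ⟨f.trans (blocks.trans f'.symm), fun a b => ?_⟩
  simp only [hf, hf', Equiv.trans_apply, Equiv.apply_symm_apply]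
  exact E.injective.eq_iff.symm

theorem Finpartition.exists_perm_of_map_card_parts_eq {α : Type*} [Fintype α] [DecidableEq α]
    (P Q : Finpartition (Finset.univ : Finset α))
    (h : P.parts.val.map Finset.card = Q.parts.val.map Finset.card) :
    ∃ σ : Equiv.Perm α, ∀ u v,
      (∃ B ∈ P.parts, u ∈ B ∧ v ∈ B) ↔ ∃ B ∈ Q.parts, σ u ∈ B ∧ σ v ∈ B := by
  obtain ⟨e, he⟩ := P.exists_equiv_part_eq_part_iff Q h
  refine ⟨(Equiv.subtypeUnivEquiv Finset.mem_univ).symm.trans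
    (e.trans (Equiv.subtypeUnivEquiv Finset.mem_univ)), fun u v => ?_⟩
  rw [← P.part_eq_part_iff_exists (Finset.mem_univ u) (Finset.mem_univ v),
    ← Q.part_eq_part_iff_exists (Finset.mem_univ _) (Finset.mem_univ _)]
  exact he ⟨u, Finset.mem_univ u⟩ ⟨v, Finset.mem_univ v⟩

theorem ProbabilityTheory.iIndepFun.map_perm_eq {ι Ω β : Type*} [Fintype ι] [MeasurableSpace Ω]
    [MeasurableSpace β] {μ : Measure Ω} {X : ι → Ω → β} (hX : ∀ i, AEMeasurable (X i) μ)
    (hindep : iIndepFun X μ) (hident : ∀ i j, μ.map (X i) = μ.map (X j)) (σ : Equiv.Perm ι) :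
    μ.map (fun ω i => X (σ i) ω) = μ.map (fun ω i => X i ω) := by
  rw [(hindep.precomp σ.injective).map_fun_eq_pi_map fun i => hX (σ i),
    hindep.map_fun_eq_pi_map hX]
  exact congrArg Measure.pi (funext fun i => hident (σ i) i)

theorem contact_graph_prob_exchangeable_general
    (N M : ℕ)
    {Ω : Type*} [MeasurableSpace Ω] (μ : Measure Ω)
    (X : Fin M → Ω → Fin N)
    (hXmeas : ∀ j, Measurable (X j))
    (hXindep : iIndepFun X μ)
    (p : Fin M → Fin N → NNReal)
    (hp : ∀ j i, μ {ω | X j ω = i} = p j i)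
    (q : Fin N → NNReal) (hq : ∀ j, p j = q)
    (g g' : Finpartition (Finset.univ : Finset (Fin M)))
    (hsizes : g.parts.val.map Finset.card = g'.parts.val.map Finset.card) :
    μ {ω | ∀ u v : Fin M, X u ω = X v ω ↔ ∃ B ∈ g.parts, u ∈ B ∧ v ∈ B}
      = μ {ω | ∀ u v : Fin M, X u ω = X v ω ↔ ∃ B ∈ g'.parts, u ∈ B ∧ v ∈ B} := by
  obtain ⟨σ, hσ⟩ := g.exists_perm_of_map_card_parts_eq g' hsizes
  have hident (i j : Fin M) : μ.map (X i) = μ.map (X j) := Measure.ext_of_singleton fun c => by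
    rw [Measure.map_apply (hXmeas i) (measurableSet_singleton c),
      Measure.map_apply (hXmeas j) (measurableSet_singleton c)]
    simp only [Set.preimage, Set.mem_singleton_iff, hp, hq]
  let contact (P : Finpartition (Finset.univ : Finset (Fin M))) : Set (Fin M → Fin N) :=
    {x | ∀ u v, x u = x v ↔ ∃ B ∈ P.parts, u ∈ B ∧ v ∈ B}
  have hcontact (x : Fin M → Fin N) : x ∈ contact g ↔ x ∘ σ.symm ∈ contact g' := by
    refine ⟨fun hx u v => ?_, fun hx u v => ?_⟩
    · simpa [hσ] using hx (σ.symm u) (σ.symm v)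
    · simpa [hσ] using hx (σ u) (σ v)
  have hmeas : MeasurableSet (contact g') := (Set.toFinite _).measurableSet
  calc μ {ω | ∀ u v : Fin M, X u ω = X v ω ↔ ∃ B ∈ g.parts, u ∈ B ∧ v ∈ B}
      = μ.map (fun ω i => X (σ.symm i) ω) (contact g') := by
        rw [Measure.map_apply (measurable_pi_lambda _ fun i => hXmeas _) hmeas]
        exact congrArg μ (Set.ext fun ω => hcontact fun i => X i ω)
    _ = μ.map (fun ω i => X i ω) (contact g') := by
        rw [hXindep.map_perm_eq (fun i => (hXmeas i).aemeasurable) hident]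
    _ = μ {ω | ∀ u v : Fin M, X u ω = X v ω ↔ ∃ B ∈ g'.parts, u ∈ B ∧ v ∈ B} :=
        Measure.map_apply (measurable_pi_lambda _ hXmeas) hmeas

/-- exchangeability of identically distributed walkers: if all walkers share the
same marginal distribution `q`, then any two contact graphs whose multisets of block sizes
coincide have equally probable events. -/
theorem contact_graph_prob_exchangeable
    (N M : ℕ) (hN : 1 ≤ N) (hM : 1 ≤ M)
    {Ω : Type*} [MeasurableSpace Ω] (μ : Measure Ω) [IsProbabilityMeasure μ]
    (X : Fin M → Ω → Fin N)
    (hXmeas : ∀ j, Measurable (X j))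
    (hXindep : iIndepFun X μ)
    (p : Fin M → Fin N → NNReal)
    (hp : ∀ j i, μ {ω | X j ω = i} = p j i)
    (hpsum : ∀ j, ∑ i, p j i = 1)
    (q : Fin N → NNReal) (hq : ∀ j, p j = q)
    (g g' : Finpartition (Finset.univ : Finset (Fin M)))
    (hsizes : g.parts.val.map Finset.card = g'.parts.val.map Finset.card) :
    μ {ω | ∀ u v : Fin M, X u ω = X v ω ↔ ∃ B ∈ g.parts, u ∈ B ∧ v ∈ B}
      = μ {ω | ∀ u v : Fin M, X u ω = X v ω ↔ ∃ B ∈ g'.parts, u ∈ B ∧ v ∈ B} :=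
  contact_graph_prob_exchangeable_general N M μ X hXmeas hXindep p hp q hq g g' hsizes
end

section
/- (Steady-state unlabelled formula, equation (22)) Suppose all walkers have the same marginal distribution q : Fin N → ℝ≥0 (p j = q for all j). Let Q = {q_1, …, q_m} be a multiset of m positive integers summing to M with multiplicities c_j (1 ≤ j ≤ M), and let E^u_Q be the union of the events E_g over all contact graphs g whose multiset of block sizes equals Q. Then μ(E^u_Q) = [ M! / ( ∏_{i=1}^{m} q_i! · ∏_{j=1}^{M} c_j! ) ] · ∑_{i_1, …, i_m pairwise distinct elements of Fin N} ∏_{j=1}^{m} (q_{i_j})^{q_j}, where (q_{i_j})^{q_j} denotes the q_j-th power of the probability q(i_j). -/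
/-!
By independence, `μ (E^u_Q)` is the sum of `∏ⱼ q (x j)` over the configurations
`x : Fin M → Fin N` whose nonempty fibres have sizes `Q`. These are counted by double counting
pairs `(ι, c)` of an injection `ι : Fin m → Fin N` and a map `c : Fin M → Fin m` with fibres of
sizes `q₁, …, q_m`; the configuration `ι ∘ c` has weight `∏ₖ q (ι k) ^ qₖ`. For fixed `ι` there
are `M! / ∏ₖ qₖ!` maps `c`, forming one orbit of `Equiv.Perm (Fin M)` whose stabilisers are
products of symmetric groups of the fibres. Conversely a configuration with block sizes `Q` is
`ι ∘ c` for exactly `∏ₛ (#{k | qₖ = s})!` pairs, one for each labelling of its blocks by `Fin m`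
that respects their sizes.
-/

open Finset Function MeasureTheory ProbabilityTheory
open scoped Nat

theorem Finpartition.parts_eq_image_part {α : Type*} [DecidableEq α] {s : Finset α}
    (P : Finpartition s) : P.parts = s.image P.part := by
  ext t
  refine ⟨fun ht => ?_, fun ht => ?_⟩
  · obtain ⟨a, ha, rfl⟩ := P.part_surjOn ht
    exact mem_image_of_mem _ ha
  · obtain ⟨a, ha, rfl⟩ := mem_image.1 ht
    exact P.part_mem.2 ha

section BlockSizes

variable {α β : Type*} [Fintype α] [DecidableEq β]

/-- The block sizes of the contact graph of the configuration `x`. -/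
def blockSizes (x : α → β) : Multiset ℕ := (univ.image x).val.map fun b => #{a | x a = b}

variable [DecidableEq α]

theorem Finpartition.parts_eq_image_fiber_iff (x : α → β) (g : Finpartition (univ : Finset α)) :
    g.parts = univ.image (fun v => ({u | x u = x v} : Finset α)) ↔
      ∀ u v, x u = x v ↔ ∃ B ∈ g.parts, u ∈ B ∧ v ∈ B := by
  constructor
  · intro h u v
    simp only [h, mem_image, mem_univ, true_and, exists_exists_eq_and, mem_filter]
    exact ⟨fun huv => ⟨v, huv, rfl⟩, fun ⟨w, hu, hv⟩ => hu.trans hv.symm⟩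
  · intro h
    rw [g.parts_eq_image_part]
    refine image_congr fun v _ => ?_
    ext u
    simp [g.mem_part_iff_exists, h]

theorem blockSizes_eq_map_card_image_fiber (x : α → β) :
    blockSizes x = (univ.image fun v => ({u | x u = x v} : Finset α)).val.map card := by
  have hinj : Set.InjOn (fun b => ({a | x a = b} : Finset α)) (univ.image x) := by
    intro b hb b' _ hbb'
    obtain ⟨a, -, rfl⟩ := mem_image.1 hb
    simpa using (Finset.ext_iff.1 hbb' a).1 (by simp)
  have himage : univ.image (fun v => ({u | x u = x v} : Finset α)) =
      (univ.image x).image fun b => ({a | x a = b} : Finset α) := by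
    rw [image_image]; rfl
  rw [blockSizes, himage, image_val_of_injOn hinj, Multiset.map_map]
  rfl

theorem exists_finpartition_iff_blockSizes_eq (x : α → β) (Q : Multiset ℕ) :
    (∃ g : Finpartition (univ : Finset α), g.parts.val.map card = Q ∧
        ∀ u v, x u = x v ↔ ∃ B ∈ g.parts, u ∈ B ∧ v ∈ B) ↔ blockSizes x = Q := by
  simp_rw [← Finpartition.parts_eq_image_fiber_iff, blockSizes_eq_map_card_image_fiber]
  constructor
  · rintro ⟨g, hQ, hg⟩
    rwa [← hg]
  · intro hQ
    classical
    have hparts : (Finpartition.ofSetoid (Setoid.ker x)).parts =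
        univ.image fun v => ({u | x u = x v} : Finset α) := by
      rw [Finpartition.ofSetoid, Finpartition.ofSetSetoid_parts]
      refine image_congr fun v _ => ?_
      ext u
      simp [Setoid.ker_def, eq_comm]
    exact ⟨_, hparts ▸ hQ, hparts⟩

end BlockSizes

section Permutations

variable {α κ : Type*} [Fintype α] [DecidableEq κ]

theorem exists_perm_comp_eq {f g : α → κ} (h : ∀ k, #{a | f a = k} = #{a | g a = k}) :
    ∃ σ : Equiv.Perm α, f ∘ σ = g := by
  have e : ∀ k, {a // g a = k} ≃ {a // f a = k} := fun k =>
    Fintype.equivOfCardEq (by simp only [Fintype.card_subtype, h])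
  exact ⟨Equiv.ofFiberEquiv e, funext (Equiv.ofFiberEquiv_map e)⟩

theorem card_fiber_comp_perm (f : α → κ) (σ : Equiv.Perm α) (k : κ) :
    #{a | f (σ a) = k} = #{a | f a = k} := by
  simp only [← Fintype.card_subtype]
  exact Fintype.card_congr (σ.subtypeEquiv fun _ => Iff.rfl)

theorem exists_card_fiber_eq [Fintype κ] {qs : κ → ℕ} (hqs : ∑ k, qs k = Fintype.card α) :
    ∃ c : α → κ, ∀ k, #{a | c a = k} = qs k := by
  obtain ⟨e⟩ : Nonempty (α ≃ Σ k, Fin (qs k)) := Fintype.card_eq.1 (by simp [hqs])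
  refine ⟨fun a => (e a).1, fun k => ?_⟩
  simp only [← Fintype.card_subtype]
  rw [Fintype.card_congr ((e.subtypeEquiv (q := fun p => p.1 = k) fun _ => Iff.rfl).trans
    (Equiv.sigmaSubtype k)), Fintype.card_fin]

variable [Fintype κ] [DecidableEq α]

theorem card_perm_comp_eq {f g : α → κ} (h : ∀ k, #{a | f a = k} = #{a | g a = k}) :
    #{σ : Equiv.Perm α | f ∘ σ = g} = ∏ k, (#{a | g a = k})! := by
  obtain ⟨σ₀, rfl⟩ := exists_perm_comp_eq h
  calc #{σ : Equiv.Perm α | f ∘ σ = f ∘ σ₀}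
      = #{τ : Equiv.Perm α | f ∘ σ₀ ∘ τ = f ∘ σ₀} := by
        refine card_nbij' (σ₀⁻¹ * ·) (σ₀ * ·) (fun σ hσ => ?_) (fun τ hτ => ?_)
          (fun σ _ => by simp) (fun τ _ => by simp)
        · simp only [coe_filter, mem_univ, true_and, Set.mem_ofPred_eq] at hσ ⊢
          rwa [← Equiv.Perm.coe_mul, mul_inv_cancel_left]
        · simp only [coe_filter, mem_univ, true_and, Set.mem_ofPred_eq] at hτ ⊢
          rwa [Equiv.Perm.coe_mul]
    _ = ∏ k, (#{a | (f ∘ σ₀) a = k})! := by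
        have := DomMulAct.stabilizer_card (f ∘ σ₀)
        simp only [Fintype.card_subtype] at this
        exact this

def mapsOfFiberCard (qs : κ → ℕ) : Finset (α → κ) := {c | ∀ k, #{a | c a = k} = qs k}

theorem card_mapsOfFiberCard_mul {qs : κ → ℕ} (hqs : ∑ k, qs k = Fintype.card α) :
    #(mapsOfFiberCard qs : Finset (α → κ)) * ∏ k, (qs k)! = (Fintype.card α)! := by
  obtain ⟨c₀, hc₀⟩ := exists_card_fiber_eq hqs
  have hmaps : ∀ σ : Equiv.Perm α, c₀ ∘ σ ∈ (mapsOfFiberCard qs : Finset (α → κ)) := fun σ => by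
    simp [mapsOfFiberCard, card_fiber_comp_perm, hc₀]
  have hfiber : ∀ c ∈ (mapsOfFiberCard qs : Finset (α → κ)),
      #{σ : Equiv.Perm α | c₀ ∘ σ = c} = ∏ k, (qs k)! := fun c hc => by
    simp only [mapsOfFiberCard, mem_filter, mem_univ, true_and] at hc
    rw [card_perm_comp_eq fun k => (hc₀ k).trans (hc k).symm]
    simp only [hc]
  rw [← Fintype.card_perm, ← card_univ, card_eq_sum_card_fiberwise fun σ _ => hmaps σ,
    sum_congr rfl hfiber, sum_const, smul_eq_mul]

theorem prod_comp_of_mem_mapsOfFiberCard {R : Type*} [CommMonoid R] {qs : κ → ℕ} {c : α → κ}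
    (hc : c ∈ mapsOfFiberCard qs) (f : κ → R) : ∏ a, f (c a) = ∏ k, f k ^ qs k := by
  simp only [mapsOfFiberCard, mem_filter, mem_univ, true_and] at hc
  rw [← prod_fiberwise univ c]
  refine prod_congr rfl fun k _ => ?_
  rw [prod_congr rfl fun a ha => by rw [(mem_filter.1 ha).2], prod_const, hc]

end Permutations

section FiberwiseInjections

variable {α β γ : Type*}

theorem fiberwise_apply_eq {u : α → γ} {v : β → γ} {S : Finset γ} (hu : ∀ a, u a ∈ S)
    (e : ∀ s : S, ({a // u a = s} ↪ {b // v b = s})) {a : α} {s : γ} (hs : s ∈ S)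
    (ha : u a = s) : (e ⟨u a, hu a⟩ ⟨a, rfl⟩ : β) = e ⟨s, hs⟩ ⟨a, ha⟩ := by
  subst ha; rfl

def injectiveFiberwiseEquiv (u : α → γ) (v : β → γ) (S : Finset γ) (hu : ∀ a, u a ∈ S) :
    {ι : α → β // Injective ι ∧ ∀ a, v (ι a) = u a} ≃
      ∀ s : S, ({a // u a = s} ↪ {b // v b = s}) where
  toFun ι s := ⟨fun a => ⟨ι.1 a, (ι.2.2 a).trans a.2⟩,
    fun a a' h => Subtype.ext (ι.2.1 (congrArg Subtype.val h))⟩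
  invFun e := by
    refine ⟨fun a => e ⟨u a, hu a⟩ ⟨a, rfl⟩, fun a a' h => ?_, fun a => (e _ _).2⟩
    have hua : u a = u a' := ((e _ _).2.symm.trans (congrArg v h)).trans (e _ _).2
    dsimp only at h
    rw [fiberwise_apply_eq hu e (hu a') hua] at h
    exact congrArg Subtype.val ((e _).injective (Subtype.ext h))
  left_inv ι := rfl
  right_inv e := by
    funext ⟨s, hs⟩
    ext ⟨a, ha⟩
    exact fiberwise_apply_eq hu e hs ha

theorem card_injective_fiberwise [Fintype α] [Fintype β] [DecidableEq α] [DecidableEq β]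
    [DecidableEq γ] (u : α → γ) (v : β → γ) (S : Finset γ) (hu : ∀ a, u a ∈ S)
    (hcard : ∀ s ∈ S, #{a | u a = s} = #{b | v b = s}) :
    #{ι : α → β | Injective ι ∧ ∀ a, v (ι a) = u a} = ∏ s ∈ S, (#{a | u a = s})! := by
  rw [← Fintype.card_subtype, Fintype.card_congr (injectiveFiberwiseEquiv u v S hu),
    Fintype.card_pi, ← prod_coe_sort S]
  refine prod_congr rfl fun s _ => ?_
  rw [Fintype.card_embedding_eq, Fintype.card_subtype, Fintype.card_subtype, ← hcard s s.2,
    Nat.descFactorial_self]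

end FiberwiseInjections

section Factorizations

variable {α β κ : Type*} [Fintype α] [Fintype κ] [DecidableEq β] {qs : κ → ℕ}

theorem exists_comp_eq_of_card_fiber (hqs : ∑ k, qs k = Fintype.card α)
    {x : α → β} {ι : κ → β} (hι : Injective ι) (hx : ∀ k, #{a | x a = ι k} = qs k) :
    ∃ c : α → κ, ι ∘ c = x := by
  have hcard : #{a | x a ∈ univ.image ι} = Fintype.card α := by
    rw [← sum_card_fiberwise_eq_card_filter, sum_image hι.injOn, ← hqs]
    exact sum_congr rfl fun k _ => hx k
  have hcover : ∀ a, x a ∈ univ.image ι := fun a => by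
    simpa using (Finset.ext_iff.1 (eq_univ_of_card _ hcard) a).2 (mem_univ a)
  choose c _ hc using fun a => mem_image.1 (hcover a)
  exact ⟨c, funext hc⟩

theorem card_fiber_eq_of_blockSizes_eq [Fintype β] {x : α → β}
    (hx : blockSizes x = univ.val.map qs)
    {s : ℕ} (hs : 0 < s) : #{b | #{a | x a = b} = s} = #{k | qs k = s} := by
  have h := congrArg (Multiset.count s) hx
  simp only [blockSizes, Multiset.count_map, ← filter_val, card_val, eq_comm (a := s)] at h
  rw [← h]
  congr 1
  ext b
  simp only [mem_filter, mem_univ, true_and, mem_image, iff_and_self]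
  intro hb
  obtain ⟨a, ha⟩ := card_pos.1 (hb ▸ hs)
  exact ⟨a, (mem_filter.1 ha).2⟩

variable [DecidableEq α] [DecidableEq κ]

theorem blockSizes_comp (hqs : ∀ k, 0 < qs k) {ι : κ → β} (hι : Injective ι)
    {c : α → κ} (hc : c ∈ mapsOfFiberCard qs) : blockSizes (ι ∘ c) = univ.val.map qs := by
  simp only [mapsOfFiberCard, mem_filter, mem_univ, true_and] at hc
  have hsurj : Surjective c := fun k => by
    obtain ⟨a, ha⟩ := card_pos.1 ((hc k).symm ▸ hqs k)
    exact ⟨a, (mem_filter.1 ha).2⟩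
  rw [blockSizes, ← image_image, image_univ_of_surjective hsurj,
    image_val_of_injOn hι.injOn, Multiset.map_map]
  refine Multiset.map_congr rfl fun k _ => ?_
  simp [hι.eq_iff, hc]

variable [Fintype β]

theorem card_factorizations_of_blockSizes_eq (hpos : ∀ k, 0 < qs k)
    (hsum : ∑ k, qs k = Fintype.card α) {x : α → β} (hx : blockSizes x = univ.val.map qs) :
    #{p ∈ ({ι : κ → β | Injective ι} : Finset _) ×ˢ (mapsOfFiberCard qs : Finset (α → κ)) |
        p.1 ∘ p.2 = x} =
      ∏ s ∈ Icc 1 (Fintype.card α), (#{k | qs k = s})! := by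
  have hmem : ∀ k, qs k ∈ Icc 1 (Fintype.card α) := fun k =>
    mem_Icc.2 ⟨hpos k, hsum ▸ single_le_sum (fun _ _ => Nat.zero_le _) (mem_univ k)⟩
  rw [← card_injective_fiberwise qs (fun b => #{a | x a = b}) _ hmem fun s hs =>
    (card_fiber_eq_of_blockSizes_eq hx (mem_Icc.1 hs).1).symm]
  refine card_nbij Prod.fst ?_ ?_ ?_
  · rintro ⟨ι, c⟩ hp
    simp only [coe_filter, mem_product, mapsOfFiberCard, mem_filter, mem_univ, true_and,
      Set.mem_ofPred_eq] at hp ⊢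
    obtain ⟨⟨hι, hc⟩, rfl⟩ := hp
    simpa [hι.eq_iff] using ⟨hι, hc⟩
  · rintro ⟨ι, c⟩ hp ⟨ι', c'⟩ hp' (rfl : ι = ι')
    simp only [coe_filter, mem_product, mem_filter, mem_univ, true_and,
      Set.mem_ofPred_eq] at hp hp'
    exact Prod.ext rfl (hp.1.1.comp_left (hp.2.trans hp'.2.symm))
  · intro ι hι
    simp only [coe_filter, mem_univ, true_and, Set.mem_ofPred_eq] at hι
    obtain ⟨c, rfl⟩ := exists_comp_eq_of_card_fiber hsum hι.1 hι.2
    refine ⟨(ι, c), ?_, rfl⟩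
    simp only [coe_filter, mem_product, mapsOfFiberCard, mem_filter, mem_univ, true_and,
      Set.mem_ofPred_eq, and_true]
    simpa [hι.1.eq_iff] using hι

theorem prod_factorial_mul_sum_blockSizes_eq {R : Type*} [CommSemiring R]
    (hpos : ∀ k, 0 < qs k) (hsum : ∑ k, qs k = Fintype.card α) (f : β → R) :
    (((∏ k, (qs k)!) * ∏ s ∈ Icc 1 (Fintype.card α), (#{k | qs k = s})! : ℕ) : R) *
        ∑ x : α → β with blockSizes x = univ.val.map qs, ∏ a, f (x a) =
      (Fintype.card α)! * ∑ ι : κ → β with Injective ι, ∏ k, f (ι k) ^ qs k := by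
  set P := ({ι : κ → β | Injective ι} : Finset _) ×ˢ (mapsOfFiberCard qs : Finset (α → κ))
  have hlabelled : ∑ p ∈ P, ∏ a, f (p.1 (p.2 a)) =
      #(mapsOfFiberCard qs : Finset (α → κ)) *
        ∑ ι : κ → β with Injective ι, ∏ k, f (ι k) ^ qs k := by
    rw [sum_product, mul_sum]
    refine sum_congr rfl fun ι _ => ?_
    dsimp only
    rw [sum_congr rfl fun c hc => prod_comp_of_mem_mapsOfFiberCard hc fun k => f (ι k),
      sum_const, nsmul_eq_mul]
  have hunlabelled : ∑ p ∈ P, ∏ a, f (p.1 (p.2 a)) =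
      ∑ x : α → β with blockSizes x = univ.val.map qs,
        (∏ s ∈ Icc 1 (Fintype.card α), (#{k | qs k = s})! : ℕ) * ∏ a, f (x a) := by
    rw [← sum_fiberwise_of_maps_to (g := fun p => p.1 ∘ p.2)
      (t := {x | blockSizes x = univ.val.map qs}) ?_]
    · refine sum_congr rfl fun x hx => ?_
      rw [← card_factorizations_of_blockSizes_eq hpos hsum (mem_filter.1 hx).2, ← nsmul_eq_mul,
        ← sum_const]
      exact sum_congr rfl fun p hp => by rw [← (mem_filter.1 hp).2]; rfl
    · rintro ⟨ι, c⟩ hp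
      simp only [P, mem_product, mem_filter, mem_univ, true_and] at hp ⊢
      exact blockSizes_comp hpos hp.1 hp.2
  rw [Nat.cast_mul, mul_assoc, mul_sum, ← hunlabelled, hlabelled, ← mul_assoc, ← Nat.cast_mul,
    mul_comm (∏ k, (qs k)!), card_mapsOfFiberCard_mul hsum]

end Factorizations

theorem ProbabilityTheory.iIndepFun.measure_preimage_finset_eq_sum_prod {Ω ι β : Type*}
    [MeasurableSpace Ω] [Fintype ι] [MeasurableSpace β] [MeasurableSingletonClass β]
    {μ : Measure Ω} {X : ι → Ω → β} (hindep : iIndepFun X μ) (hX : ∀ j, Measurable (X j))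
    (A : Finset (ι → β)) :
    μ ((fun ω j => X j ω) ⁻¹' A) = ∑ x ∈ A, ∏ j, μ (X j ⁻¹' {x j}) := by
  have hfiber : ∀ x : ι → β, (fun ω j => X j ω) ⁻¹' {x} = ⋂ j, X j ⁻¹' {x j} := by
    intro x; ext ω; simp [funext_iff]
  rw [← sum_measure_preimage_singleton A fun x _ =>
    measurable_pi_lambda _ hX (measurableSet_singleton x)]
  refine sum_congr rfl fun x _ => ?_
  rw [hfiber, hindep.meas_iInter fun j => ⟨{x j}, measurableSet_singleton _, rfl⟩]

theorem steady_state_unlabelled_formula_general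
    (N M : ℕ)
    {Ω : Type*} [MeasurableSpace Ω] (μ : Measure Ω)
    (X : Fin M → Ω → Fin N)
    (hXmeas : ∀ j, Measurable (X j))
    (hXindep : iIndepFun X μ)
    (p : Fin M → Fin N → NNReal)
    (hp : ∀ j i, μ {ω | X j ω = i} = p j i)
    (q : Fin N → NNReal) (hq : ∀ j, p j = q)
    (m : ℕ) (qs : Fin m → ℕ)
    (hqs_pos : ∀ j, 0 < qs j) (hqs_sum : ∑ j, qs j = M) :
    (μ (⋃ (g' : Finpartition (Finset.univ : Finset (Fin M)))
          (_ : g'.parts.val.map Finset.card = Finset.univ.val.map qs),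
          {ω | ∀ u v : Fin M, X u ω = X v ω ↔ ∃ B ∈ g'.parts, u ∈ B ∧ v ∈ B})).toReal
      = ((M.factorial : ℝ) /
            ((∏ j : Fin m, (qs j).factorial)
              * ∏ j ∈ Finset.Icc 1 M, (((Finset.univ.val.map qs).count j).factorial : ℕ)))
        * ∑ ι ∈ Finset.univ.filter (fun ι : Fin m → Fin N => Function.Injective ι),
            ∏ j : Fin m, (q (ι j) : ℝ) ^ qs j := by
  have hevent : (⋃ (g' : Finpartition (univ : Finset (Fin M)))
      (_ : g'.parts.val.map card = univ.val.map qs),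
        {ω | ∀ u v : Fin M, X u ω = X v ω ↔ ∃ B ∈ g'.parts, u ∈ B ∧ v ∈ B}) =
      (fun ω j => X j ω) ⁻¹' ↑({x | blockSizes x = univ.val.map qs} : Finset (Fin M → Fin N)) := by
    ext ω
    simpa [-exists_prop, exists_prop'] using
      exists_finpartition_iff_blockSizes_eq (fun j => X j ω) _
  have hcount : ∀ s, (univ.val.map qs).count s = #{k | qs k = s} := fun s => by
    simp only [Multiset.count_map, card, filter_val, eq_comm]
  have hcomb := prod_factorial_mul_sum_blockSizes_eq (α := Fin M) (β := Fin N) hqs_pos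
    (by simpa using hqs_sum) fun i => (q i : ℝ)
  simp only [Fintype.card_fin] at hcomb
  rw [hevent, hXindep.measure_preimage_finset_eq_sum_prod hXmeas]
  simp only [Set.preimage, Set.mem_singleton_iff, hp, hq, ← ENNReal.ofNNReal_finsetProd,
    ← ENNReal.ofNNReal_finsetSum, ENNReal.coe_toReal, NNReal.coe_sum, NNReal.coe_prod, hcount]
  rw [div_mul_eq_mul_div, eq_div_iff (by positivity), mul_comm, ← hcomb]
  push_cast
  ring

/-- steady-state unlabelled formula, equation (22): for identically
distributed walkers with common marginal `q`, the probability of observing some contact graph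
with block sizes `q₁, …, q_m` (given by `qs : Fin m → ℕ`) equals
`γ(Q) · ∑_{i₁,…,i_m pairwise distinct} ∏ⱼ q(iⱼ)^{qⱼ}`. -/
theorem steady_state_unlabelled_formula
    (N M : ℕ) (hN : 1 ≤ N) (hM : 1 ≤ M)
    {Ω : Type*} [MeasurableSpace Ω] (μ : Measure Ω) [IsProbabilityMeasure μ]
    (X : Fin M → Ω → Fin N)
    (hXmeas : ∀ j, Measurable (X j))
    (hXindep : iIndepFun X μ)
    (p : Fin M → Fin N → NNReal)
    (hp : ∀ j i, μ {ω | X j ω = i} = p j i)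
    (hpsum : ∀ j, ∑ i, p j i = 1)
    (q : Fin N → NNReal) (hq : ∀ j, p j = q)
    (m : ℕ) (qs : Fin m → ℕ)
    (hqs_pos : ∀ j, 0 < qs j) (hqs_sum : ∑ j, qs j = M) :
    (μ (⋃ (g' : Finpartition (Finset.univ : Finset (Fin M)))
          (_ : g'.parts.val.map Finset.card = Finset.univ.val.map qs),
          {ω | ∀ u v : Fin M, X u ω = X v ω ↔ ∃ B ∈ g'.parts, u ∈ B ∧ v ∈ B})).toReal
      = ((M.factorial : ℝ) /
            ((∏ j : Fin m, (qs j).factorial)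
              * ∏ j ∈ Finset.Icc 1 M, (((Finset.univ.val.map qs).count j).factorial : ℕ)))
        * ∑ ι ∈ Finset.univ.filter (fun ι : Fin m → Fin N => Function.Injective ι),
            ∏ j : Fin m, (q (ι j) : ℝ) ^ qs j :=
  steady_state_unlabelled_formula_general N M μ X hXmeas hXindep p hp q hq m qs hqs_pos hqs_sum
end

section
/- (Dobinski-type series for Bell numbers, equation (Series_Bell_number)) For every natural number k, B_k = e^{−1} · ∑_{n=0}^{∞} n^k / n!, where the sum is a convergent series of real numbers (with the convention 0^0 = 1). -/
/-!
A partition of `insert a s` (with `a ∉ s`) is the same as a block `insert a t` with `t ⊆ s`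
together with a partition of `s \ t`, so partition counts satisfy the recursion
`B (k + 1) = ∑ i, (k choose i) * B (k - i)` defining `Nat.bell`. On the analytic side,
`(n + 1) ^ (k + 1) / (n + 1)! = (n + 1) ^ k / n!`, and expanding `(n + 1) ^ k` binomially shows that
the sums `∑ n, n ^ k / n!` obey the same recursion, starting from `e` at `k = 0`.
-/

/-- The Bell number `B_k`: the number of partitions of a `k`-element set. -/
def bellNumber (k : ℕ) : ℕ :=
  Fintype.card (Finpartition (Finset.univ : Finset (Fin k)))

open Finset Nat

namespace Finpartition

lemma parts_avoid_of_mem {β : Type*} [GeneralizedBooleanAlgebra β] [DecidableEq β] {x : β}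
    (P : Finpartition x) {t : β} (ht : t ∈ P.parts) :
    (P.avoid t).parts = P.parts.erase t := by
  ext c
  rw [mem_avoid, mem_erase]
  constructor
  · rintro ⟨d, hd, hdt, rfl⟩
    have hne : d ≠ t := fun h => hdt h.le
    have hdis : Disjoint d t := P.disjoint hd ht hne
    rw [hdis.sdiff_eq_left]
    exact ⟨hne, hd⟩
  · rintro ⟨hct, hc⟩
    have hdis : Disjoint c t := P.disjoint hc ht hct
    exact ⟨c, hc, fun hle => P.ne_bot hc (hdis.eq_bot_of_le hle), hdis.sdiff_eq_left⟩

variable {α : Type*} [DecidableEq α] {a : α} {s : Finset α}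

def insertPart (ha : a ∉ s) (t : s.powerset) (P : Finpartition (s \ t.1)) :
    Finpartition (insert a s) :=
  P.extend (b := insert a t.1) (insert_ne_empty a t.1)
    (disjoint_insert_right.2 ⟨fun h => ha (mem_sdiff.1 h).1, sdiff_disjoint⟩)
    (by rw [sup_eq_union, union_insert, sdiff_union_of_subset (mem_powerset.1 t.2)])

lemma parts_insertPart (ha : a ∉ s) (t : s.powerset) (P : Finpartition (s \ t.1)) :
    (insertPart ha t P).parts = insert (insert a t.1) P.parts := rfl

lemma part_insertPart (ha : a ∉ s) (t : s.powerset) (P : Finpartition (s \ t.1)) :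
    (insertPart ha t P).part a = insert a t.1 :=
  part_eq_of_mem _ (by rw [parts_insertPart]; exact mem_insert_self _ _) (mem_insert_self _ _)

lemma insertPart_injective (ha : a ∉ s) :
    Function.Injective (fun P : Σ t : s.powerset, Finpartition (s \ t.1) =>
      insertPart ha P.1 P.2) := by
  rintro ⟨t, P⟩ ⟨t', P'⟩ h
  have hat (u : s.powerset) : a ∉ u.1 := fun h => ha (mem_powerset.1 u.2 h)
  have ht : t = t' := by
    have := congrArg (part · a) h
    simp only [part_insertPart] at this
    rw [Subtype.ext_iff, ← erase_insert (hat t), this, erase_insert (hat t')]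
  subst ht
  have hB (R : Finpartition (s \ t.1)) : insert a t.1 ∉ R.parts := fun hR =>
    ha (mem_sdiff.1 (R.le hR (mem_insert_self a t.1))).1
  have := congrArg parts h
  simp only [parts_insertPart] at this
  have hP : P = P' := Finpartition.ext (by rw [← erase_insert (hB P), this, erase_insert (hB P')])
  rw [hP]

lemma insertPart_surjective (ha : a ∉ s) :
    Function.Surjective (fun P : Σ t : s.powerset, Finpartition (s \ t.1) =>
      insertPart ha P.1 P.2) := by
  intro Q
  set B := Q.part a
  have hB : B ∈ Q.parts := Q.part_mem.2 (mem_insert_self a s)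
  have haB : a ∈ B := Q.mem_part_self.2 (mem_insert_self a s)
  have htB : insert a (B.erase a) = B := insert_erase haB
  have hts : B.erase a ∈ s.powerset := mem_powerset.2 fun x hx => by
    have := Q.le hB (mem_of_mem_erase hx)
    exact (mem_insert.1 this).resolve_left (ne_of_mem_erase hx)
  have hcompl : insert a s \ B = s \ B.erase a := by
    ext x
    by_cases hx : x = a
    · subst hx; simp [haB, ha]
    · simp [hx]
  refine ⟨⟨⟨B.erase a, hts⟩, (Q.avoid B).copy hcompl⟩, Finpartition.ext ?_⟩
  simp only [parts_insertPart, copy_parts, parts_avoid_of_mem Q hB, htB, insert_erase hB]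

theorem card_insert (ha : a ∉ s) :
    Fintype.card (Finpartition (insert a s)) =
      ∑ t ∈ s.powerset, Fintype.card (Finpartition (s \ t)) := by
  rw [← Fintype.card_of_bijective ⟨insertPart_injective ha, insertPart_surjective ha⟩,
    Fintype.card_sigma, sum_coe_sort s.powerset (fun t => Fintype.card (Finpartition (s \ t)))]

theorem card_eq_bell (s : Finset α) :
    Fintype.card (Finpartition s) = Nat.bell #s := by
  induction s using Finset.case_strong_induction_on with
  | h₀ =>
    rw [card_empty, Nat.bell_zero]
    exact Fintype.card_unique (α := Finpartition (⊥ : Finset α))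
  | h₁ a s ha ih =>
    simp_rw [card_insert ha, card_insert_of_notMem ha, Nat.bell_succ,
      ← Nat.range_succ_eq_Iic, ← smul_eq_mul,
      ← sum_powerset_apply_card (fun m => Nat.bell (#s - m))]
    refine sum_congr rfl fun t ht => ?_
    rw [ih (s \ t) sdiff_subset, card_sdiff_of_subset (mem_powerset.1 ht)]

end Finpartition

theorem succ_pow_succ_div_factorial_succ (k n : ℕ) :
    ((n + 1 : ℕ) : ℝ) ^ (k + 1) / (n + 1)! =
      ∑ i ∈ range (k + 1), (k.choose i : ℝ) * ((n : ℝ) ^ (k - i) / n !) := by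
  rw [factorial_succ, cast_mul, pow_succ, mul_comm ((n + 1 : ℕ) : ℝ),
    mul_div_mul_right _ _ (by positivity), cast_succ, add_comm, add_pow, sum_div]
  refine sum_congr rfl fun i _ => ?_
  ring

theorem hasSum_pow_div_factorial (k : ℕ) :
    HasSum (fun n : ℕ => (n : ℝ) ^ k / n !) (k.bell * Real.exp 1) := by
  induction k using Nat.strong_induction_on with
  | _ k ih =>
  match k with
  | 0 => simpa [Real.exp_eq_exp_ℝ] using NormedSpace.expSeries_div_hasSum_exp (1 : ℝ)
  | k + 1 =>
    refine (hasSum_nat_add_iff' 1).1 ?_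
    simp only [succ_pow_succ_div_factorial_succ, range_one, sum_singleton, CharP.cast_eq_zero,
      ne_eq, add_eq_zero, one_ne_zero, and_false, not_false_eq_true, zero_pow, zero_div, sub_zero,
      bell_succ, ← range_succ_eq_Iic, cast_sum, cast_mul, sum_mul, mul_assoc]
    exact hasSum_sum fun i _ => (ih (k - i) (by omega)).mul_left _

theorem bellNumber_eq_bell (k : ℕ) : bellNumber k = Nat.bell k := by
  rw [bellNumber, Finpartition.card_eq_bell, Finset.card_fin]

/-- Dobinski-type series for Bell numbers: for every `k`,
`B_k = e⁻¹ · ∑_{n=0}^∞ n^k / n!`, the series being convergent (with `0^0 = 1`). -/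
theorem bell_dobinski (k : ℕ) :
    Summable (fun n : ℕ => (n : ℝ) ^ k / n.factorial)
    ∧ (bellNumber k : ℝ)
        = Real.exp (-1) * ∑' n : ℕ, (n : ℝ) ^ k / n.factorial := by
  have h := hasSum_pow_div_factorial k
  refine ⟨h.summable, ?_⟩
  rw [h.tsum_eq, bellNumber_eq_bell, mul_left_comm, ← Real.exp_add, neg_add_cancel, Real.exp_zero,
    mul_one]
end
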